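/- arXiv:2508.10209 — 11 statements merged into one kernel-verified Lean document; each statement's English description precedes it below -/
import Mathlib

section
/- If A ∈ P_{fin,0}(ℕ₀) satisfies 2·max(A \ {max A}) < max A (i.e., the largest element exceeds twice the second-largest), and A ≠ {0}, then A is an atom of P_{fin,0}(ℕ₀). -/
open Pointwise

/-- `X` is an atom (indecomposable element) of the monoid `P_{fin,0}(ℕ)` of finite
subsets of ℕ containing 0 under sumset addition. -/
def IsAtomP (X : Finset ℕ) : Prop :=
  0 ∈ X ∧ X ≠ {0} ∧
    ∀ A B : Finset ℕ, 0 ∈ A → 0 ∈ B → X = A + B → A = {0} ∨ B = {0}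

/-- The length set of `X` in `P_{fin,0}(ℕ)`: the set of `n` such that `X` is a sum
of `n` atoms. -/
def LengthSet (X : Finset ℕ) : Set ℕ :=
  {n | ∃ l : Multiset (Finset ℕ), Multiset.card l = n ∧ (∀ U ∈ l, IsAtomP U) ∧ l.sum = X}

/-- `X` is relatively cancellative in `P_{fin,0}(ℕ)`. -/
def RelCancel (X : Finset ℕ) : Prop :=
  ∀ B C D : Finset ℕ, 0 ∈ B → 0 ∈ C → 0 ∈ D → X = B + C → X = B + D → C = D

/-- `C` and `D` are relatively prime in `P_{fin,0}(ℕ)`: their only common divisor is `{0}`. -/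
def RelPrime (C D : Finset ℕ) : Prop :=
  ∀ T : Finset ℕ, 0 ∈ T → (∃ C' : Finset ℕ, 0 ∈ C' ∧ C = T + C') →
    (∃ D' : Finset ℕ, 0 ∈ D' ∧ D = T + D') → T = {0}

theorem atom_of_large_max (A : Finset ℕ) (h0 : 0 ∈ A) (hne : A ≠ {0})
    (h : 2 * ((A.erase (A.sup id)).sup id) < A.sup id) : IsAtomP A := by
  refine ⟨h0, hne, ?_⟩
  intro B C hB hC hBC
  by_contra hcon
  push_neg at hcon
  obtain ⟨hBne, hCne⟩ := hcon
  have hBn : B.Nonempty := ⟨0, hB⟩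
  have hCn : C.Nonempty := ⟨0, hC⟩
  set b := B.max' hBn with hb
  set c := C.max' hCn with hc
  -- b ≥ 1
  have hbpos : 0 < b := by
    rcases Nat.eq_zero_or_pos b |>.symm with h1 | h1
    · exact h1
    · exfalso; apply hBne
      apply Finset.eq_singleton_iff_unique_mem.mpr
      refine ⟨hB, fun x hx => ?_⟩
      have := B.le_max' x hx
      omega
  have hcpos : 0 < c := by
    rcases Nat.eq_zero_or_pos c |>.symm with h1 | h1
    · exact h1
    · exfalso; apply hCne
      apply Finset.eq_singleton_iff_unique_mem.mpr
      refine ⟨hC, fun x hx => ?_⟩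
      have := C.le_max' x hx
      omega
  have hbcA : b + c ∈ A := by
    rw [hBC]; exact Finset.add_mem_add (B.max'_mem hBn) (C.max'_mem hCn)
  have hsup : A.sup id = b + c := by
    apply le_antisymm
    · apply Finset.sup_le
      intro x hx
      rw [hBC, Finset.mem_add] at hx
      obtain ⟨y, hy, z, hz, rfl⟩ := hx
      exact Nat.add_le_add (B.le_max' y hy) (C.le_max' z hz)
    · exact Finset.le_sup (f := id) hbcA
  have hbA : b ∈ A := by
    have : b + 0 ∈ A := by
      rw [hBC]; exact Finset.add_mem_add (B.max'_mem hBn) hC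
    simpa using this
  have hcA : c ∈ A := by
    have : 0 + c ∈ A := by
      rw [hBC]; exact Finset.add_mem_add hB (C.max'_mem hCn)
    simpa using this
  have hbe : b ∈ A.erase (A.sup id) := by
    rw [Finset.mem_erase]; constructor
    · omega
    · exact hbA
  have hce : c ∈ A.erase (A.sup id) := by
    rw [Finset.mem_erase]; constructor
    · omega
    · exact hcA
  have h1 := Finset.le_sup (f := id) hbe
  have h2 := Finset.le_sup (f := id) hce
  simp only [id] at h1 h2
  omega
end

section
/- In the monoid P_{fin,0}(ℕ₀), every atom is relatively cancellative: if U is an atom and U = B + C = B + D for B, C, D ∈ P_{fin,0}(ℕ₀), then C = D. -/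
open Pointwise

lemma zero_singleton_add (C : Finset ℕ) : ({0} : Finset ℕ) + C = C := by
  rw [show ({0} : Finset ℕ) = 0 from rfl, zero_add]

theorem atom_relCancel (U : Finset ℕ) (hU : IsAtomP U) : RelCancel U := by
  intro B C D hB hC hD h1 h2
  obtain ⟨h0, hne, hatom⟩ := hU
  rcases hatom B C hB hC h1 with hB0 | hC0
  · rcases hatom B D hB hD h2 with _ | hD0
    · subst hB0; rw [zero_singleton_add] at h1 h2; rw [← h1, ← h2]
    · subst hB0; rw [zero_singleton_add] at h1 h2; rw [← h1, ← h2]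
  · rcases hatom B D hB hD h2 with hB0 | hD0
    · exfalso; apply hne
      rw [h1, hB0, hC0, zero_singleton_add]
    · rw [hC0, hD0]
end

section
/- Let X, Y ∈ P_{fin,0}(ℕ₀) with gcd(Y) > 2·max(X). Then for all x, x', x'' ∈ X and y, y', y'' ∈ Y with x + y = x' + x'' + y' + y'', it follows that x = x' + x'' and y = y' + y''. -/
open Pointwise

theorem sum_decomposition (X Y : Finset ℕ) (hX : 0 ∈ X) (hY : 0 ∈ Y)
    (hgcd : 2 * X.sup id < Y.gcd id)
    (x x' x'' : ℕ) (hx : x ∈ X) (hx' : x' ∈ X) (hx'' : x'' ∈ X)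
    (y y' y'' : ℕ) (hy : y ∈ Y) (hy' : y' ∈ Y) (hy'' : y'' ∈ Y)
    (h : x + y = x' + x'' + y' + y'') : x = x' + x'' ∧ y = y' + y'' := by
  set d := Y.gcd id with hd
  obtain ⟨a, ha⟩ : d ∣ y := Finset.gcd_dvd hy
  obtain ⟨b, hb⟩ : d ∣ y' := Finset.gcd_dvd hy'
  obtain ⟨c, hc⟩ : d ∣ y'' := Finset.gcd_dvd hy''
  have h1 : x ≤ X.sup id := Finset.le_sup (f := id) hx
  have h2 : x' ≤ X.sup id := Finset.le_sup (f := id) hx'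
  have h3 : x'' ≤ X.sup id := Finset.le_sup (f := id) hx''
  have hm : x % d = (x' + x'') % d := by
    have h' : (x + d * a) % d = (x' + x'' + (d * b + d * c)) % d := by
      rw [ha, hb, hc] at h; congr 1; omega
    rwa [Nat.add_mul_mod_self_left, ← Nat.mul_add, Nat.add_mul_mod_self_left] at h'
  have key : x = x' + x'' := by
    rw [Nat.mod_eq_of_lt (by omega), Nat.mod_eq_of_lt (by omega)] at hm
    exact hm
  exact ⟨key, by omega⟩
end

section
/- Let X, Y ∈ P_{fin,0}(ℕ₀) be relatively cancellative with gcd(Y) > 2·max(X). If A, B ∈ P_{fin,0}(ℕ₀) satisfy A + B = X + Y, then X = (A ∩ X) + (B ∩ X), Y = (A ∩ Y) + (B ∩ Y), and A = (A ∩ X) + (A ∩ Y). -/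
open Pointwise

/-- If `p ∈ P`, `p ≠ 0`, and `Y = P + Q` is relatively cancellative, then some
stratum `p + q` has `p` as its unique first component. -/
lemma unique_stratum (Y P Q : Finset ℕ) (hYc : RelCancel Y) (h0P : 0 ∈ P) (h0Q : 0 ∈ Q)
    (hPQ : Y = P + Q) (p : ℕ) (hp : p ∈ P) (hp0 : p ≠ 0) :
    ∃ q ∈ Q, ∀ p' ∈ P, ∀ q' ∈ Q, p' + q' = p + q → p' = p := by
  by_contra hcon
  push_neg at hcon
  have hP' : Y = Q + P.erase p := by
    apply Finset.Subset.antisymm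
    · intro y hy
      rw [hPQ, Finset.mem_add] at hy
      obtain ⟨p1, hp1, q1, hq1, hsum⟩ := hy
      by_cases hpp : p1 = p
      · subst hpp
        obtain ⟨p', hp', q', hq', hsum', hne⟩ := hcon q1 hq1
        rw [Finset.mem_add]
        exact ⟨q', hq', p', Finset.mem_erase.2 ⟨hne, hp'⟩, by omega⟩
      · rw [Finset.mem_add]
        exact ⟨q1, hq1, p1, Finset.mem_erase.2 ⟨hpp, hp1⟩, by omega⟩
    · rw [hPQ]
      rw [add_comm Q _]
      exact Finset.add_subset_add_right (Finset.erase_subset _ _)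
  have := hYc Q P (P.erase p) h0Q h0P
    (Finset.mem_erase.2 ⟨fun h => hp0 h.symm, h0P⟩)
    (by rw [hPQ, add_comm]) hP'
  have : p ∈ P.erase p := this ▸ hp
  exact (Finset.mem_erase.1 this).1 rfl

theorem factor_intersection (X Y : Finset ℕ) (hX : 0 ∈ X) (hY : 0 ∈ Y)
    (hXc : RelCancel X) (hYc : RelCancel Y) (hgcd : 2 * X.sup id < Y.gcd id)
    (A B : Finset ℕ) (hA : 0 ∈ A) (hB : 0 ∈ B) (hAB : A + B = X + Y) :
    X = (A ∩ X) + (B ∩ X) ∧ Y = (A ∩ Y) + (B ∩ Y) ∧ A = (A ∩ X) + (A ∩ Y) := by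
  set g := Y.gcd id with hg
  set M := X.sup id with hM
  have hg0 : 0 < g := lt_of_le_of_lt (Nat.zero_le _) hgcd
  have hXle : ∀ x ∈ X, x ≤ M := fun x hx => Finset.le_sup (f := id) hx
  have hXlt : ∀ x ∈ X, x < g := fun x hx => by have := hXle x hx; omega
  have hYdvd : ∀ y ∈ Y, g ∣ y := fun y hy => Finset.gcd_dvd hy
  have hkey : ∀ x ∈ X, ∀ y ∈ Y, (x + y) % g = x := by
    intro x hx y hy
    obtain ⟨k, rfl⟩ := hYdvd y hy
    rw [Nat.add_mul_mod_self_left]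
    exact Nat.mod_eq_of_lt (hXlt x hx)
  -- decomposition of elements of X + Y
  have hcomp : ∀ n ∈ X + Y, n % g ∈ X ∧ (n - n % g) ∈ Y := by
    intro n hn
    rw [Finset.mem_add] at hn
    obtain ⟨x, hx, y, hy, hxy⟩ := hn
    have h1 : n % g = x := by rw [← hxy]; exact hkey x hx y hy
    have h2 : n - n % g = y := by omega
    exact ⟨h1 ▸ hx, h2 ▸ hy⟩
  have hqadd : ∀ n, n % g + (n - n % g) = n := fun n => by
    have := Nat.mod_le n g; omega
  -- additivity of components
  have hadd : ∀ a ∈ X + Y, ∀ b ∈ X + Y, (a + b) % g = a % g + b % g := by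
    intro a ha b hb
    have hax := hcomp a ha
    have hbx := hcomp b hb
    have h1 : a % g ≤ M := hXle _ hax.1
    have h2 : b % g ≤ M := hXle _ hbx.1
    obtain ⟨k1, hk1⟩ := hYdvd _ hax.2
    obtain ⟨k2, hk2⟩ := hYdvd _ hbx.2
    have : a + b = (a % g + b % g) + g * (k1 + k2) := by
      rw [Nat.mul_add]
      have := hqadd a; have := hqadd b; omega
    rw [this, Nat.add_mul_mod_self_left, Nat.mod_eq_of_lt (by omega)]
  have hAsub : ∀ a ∈ A, a ∈ X + Y := by
    intro a ha
    rw [← hAB]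
    have := Finset.add_mem_add ha hB
    rwa [add_zero] at this
  have hBsub : ∀ b ∈ B, b ∈ X + Y := by
    intro b hb
    rw [← hAB]
    have := Finset.add_mem_add hA hb
    rwa [zero_add] at this
  have hABmem : ∀ a ∈ A, ∀ b ∈ B, a + b ∈ X + Y := fun a ha b hb => by
    rw [← hAB]; exact Finset.add_mem_add ha hb
  -- Claim 1 : X = (A ∩ X) + (B ∩ X)
  have claim1 : X = (A ∩ X) + (B ∩ X) := by
    apply Finset.Subset.antisymm
    · intro x hx
      have hxXY : x ∈ X + Y := by
        have := Finset.add_mem_add hx hY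
        rwa [add_zero] at this
      rw [← hAB, Finset.mem_add] at hxXY
      obtain ⟨a, ha, b, hb, hab⟩ := hxXY
      have hxg : x < g := hXlt x hx
      have haX : a ∈ X := by
        have := (hcomp a (hAsub a ha)).1
        have ha' : a % g = a := Nat.mod_eq_of_lt (by omega)
        rwa [ha'] at this
      have hbX : b ∈ X := by
        have := (hcomp b (hBsub b hb)).1
        have hb' : b % g = b := Nat.mod_eq_of_lt (by omega)
        rwa [hb'] at this
      rw [Finset.mem_add]
      exact ⟨a, Finset.mem_inter.2 ⟨ha, haX⟩, b, Finset.mem_inter.2 ⟨hb, hbX⟩, hab⟩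
    · intro n hn
      rw [Finset.mem_add] at hn
      obtain ⟨a, ha, b, hb, hab⟩ := hn
      rw [Finset.mem_inter] at ha hb
      have h1 : a + b ∈ X + Y := hABmem a ha.1 b hb.1
      have := (hcomp _ h1).1
      have h2 : (a + b) % g = a + b :=
        Nat.mod_eq_of_lt (by have := hXle a ha.2; have := hXle b hb.2; omega)
      rw [h2] at this
      rwa [hab] at this
  -- Claim 2 : Y = (A ∩ Y) + (B ∩ Y)
  have claim2 : Y = (A ∩ Y) + (B ∩ Y) := by
    apply Finset.Subset.antisymm
    · intro y hy
      have hyXY : y ∈ X + Y := by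
        have := Finset.add_mem_add hX hy
        rwa [zero_add] at this
      rw [← hAB, Finset.mem_add] at hyXY
      obtain ⟨a, ha, b, hb, hab⟩ := hyXY
      have hyg : y % g = 0 := by
        obtain ⟨k, hk⟩ := hYdvd y hy
        subst hk; exact Nat.mul_mod_right g k
      have hsum : a % g + b % g = 0 := by
        rw [← hadd a (hAsub a ha) b (hBsub b hb), hab, hyg]
      have haY : a ∈ Y := by
        have := (hcomp a (hAsub a ha)).2
        have : a - a % g ∈ Y := this
        have ha0 : a % g = 0 := by omega
        rwa [ha0, Nat.sub_zero] at this
      have hbY : b ∈ Y := by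
        have := (hcomp b (hBsub b hb)).2
        have hb0 : b % g = 0 := by omega
        rwa [hb0, Nat.sub_zero] at this
      rw [Finset.mem_add]
      exact ⟨a, Finset.mem_inter.2 ⟨ha, haY⟩, b, Finset.mem_inter.2 ⟨hb, hbY⟩, hab⟩
    · intro n hn
      rw [Finset.mem_add] at hn
      obtain ⟨a, ha, b, hb, hab⟩ := hn
      rw [Finset.mem_inter] at ha hb
      have h1 : a + b ∈ X + Y := hABmem a ha.1 b hb.1
      have ha0 : a % g = 0 := by
        obtain ⟨k, hk⟩ := hYdvd a ha.2; subst hk; exact Nat.mul_mod_right g k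
      have hb0 : b % g = 0 := by
        obtain ⟨k, hk⟩ := hYdvd b hb.2; subst hk; exact Nat.mul_mod_right g k
      have hm : (a + b) % g = 0 := by
        rw [hadd a (hAsub a ha.1) b (hBsub b hb.1), ha0, hb0]
      have := (hcomp _ h1).2
      rw [hm, Nat.sub_zero] at this
      rwa [hab] at this
  -- images
  have h0AX : (0 : ℕ) ∈ A ∩ X := Finset.mem_inter.2 ⟨hA, hX⟩
  have h0AY : (0 : ℕ) ∈ A ∩ Y := Finset.mem_inter.2 ⟨hA, hY⟩
  have h0BX : (0 : ℕ) ∈ B ∩ X := Finset.mem_inter.2 ⟨hB, hX⟩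
  have h0BY : (0 : ℕ) ∈ B ∩ Y := Finset.mem_inter.2 ⟨hB, hY⟩
  -- πA = A ∩ X
  have claimPiA : A.image (· % g) = A ∩ X := by
    have hsub : A ∩ X ⊆ A.image (· % g) := by
      intro a ha
      rw [Finset.mem_inter] at ha
      rw [Finset.mem_image]
      exact ⟨a, ha.1, Nat.mod_eq_of_lt (hXlt a ha.2)⟩
    have hX1 : X = (B ∩ X) + A.image (· % g) := by
      apply Finset.Subset.antisymm
      · intro n hn
        rw [claim1] at hn
        rw [Finset.mem_add] at hn
        obtain ⟨a, ha, b, hb, hab⟩ := hn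
        rw [Finset.mem_add]
        exact ⟨b, hb, a, hsub ha, by omega⟩
      · intro n hn
        rw [Finset.mem_add] at hn
        obtain ⟨b, hb, fa, hfa, hab⟩ := hn
        rw [Finset.mem_image] at hfa
        obtain ⟨a, ha, rfl⟩ := hfa
        rw [Finset.mem_inter] at hb
        have h1 : a + b ∈ X + Y := hABmem a ha b hb.1
        have := (hcomp _ h1).1
        have hb0 : b % g = b := Nat.mod_eq_of_lt (hXlt b hb.2)
        rw [hadd a (hAsub a ha) b (hBsub b hb.1), hb0] at this
        have heq : a % g + b = b + a % g := by omega
        rwa [← hab, ← heq]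
    have h0img : (0 : ℕ) ∈ A.image (· % g) :=
      Finset.mem_image.2 ⟨0, hA, Nat.zero_mod g⟩
    exact hXc (B ∩ X) (A.image (· % g)) (A ∩ X) h0BX h0img h0AX hX1
      (by rw [add_comm (B ∩ X) (A ∩ X)]; exact claim1)
  -- qA = A ∩ Y
  have claimQA : A.image (fun n => n - n % g) = A ∩ Y := by
    have hsub : A ∩ Y ⊆ A.image (fun n => n - n % g) := by
      intro a ha
      rw [Finset.mem_inter] at ha
      rw [Finset.mem_image]
      refine ⟨a, ha.1, ?_⟩
      obtain ⟨k, hk⟩ := hYdvd a ha.2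
      subst hk
      rw [Nat.mul_mod_right]
      omega
    have hY1 : Y = (B ∩ Y) + A.image (fun n => n - n % g) := by
      apply Finset.Subset.antisymm
      · intro n hn
        rw [claim2] at hn
        rw [Finset.mem_add] at hn
        obtain ⟨a, ha, b, hb, hab⟩ := hn
        rw [Finset.mem_add]
        exact ⟨b, hb, a, hsub ha, by omega⟩
      · intro n hn
        rw [Finset.mem_add] at hn
        obtain ⟨b, hb, fa, hfa, hab⟩ := hn
        rw [Finset.mem_image] at hfa
        obtain ⟨a, ha, rfl⟩ := hfa
        rw [Finset.mem_inter] at hb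
        have h1 : a + b ∈ X + Y := hABmem a ha b hb.1
        have h2 := (hcomp _ h1).2
        have hb0 : b % g = 0 := by
          obtain ⟨k, hk⟩ := hYdvd b hb.2; subst hk; exact Nat.mul_mod_right g k
        have hmod := hadd a (hAsub a ha) b (hBsub b hb.1)
        rw [hb0] at hmod
        have hma := Nat.mod_le a g
        have : a + b - (a + b) % g = b + (a - a % g) := by omega
        rw [this] at h2
        rwa [← hab]
    have h0img : (0 : ℕ) ∈ A.image (fun n => n - n % g) :=
      Finset.mem_image.2 ⟨0, hA, by simp⟩
    exact hYc (B ∩ Y) (A.image (fun n => n - n % g)) (A ∩ Y) h0BY h0img h0AY hY1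
      (by rw [add_comm (B ∩ Y) (A ∩ Y)]; exact claim2)
  -- qB = B ∩ Y
  have claimQB : B.image (fun n => n - n % g) = B ∩ Y := by
    have hsub : B ∩ Y ⊆ B.image (fun n => n - n % g) := by
      intro b hb
      rw [Finset.mem_inter] at hb
      rw [Finset.mem_image]
      refine ⟨b, hb.1, ?_⟩
      obtain ⟨k, hk⟩ := hYdvd b hb.2
      subst hk
      rw [Nat.mul_mod_right]
      omega
    have hY1 : Y = (A ∩ Y) + B.image (fun n => n - n % g) := by
      apply Finset.Subset.antisymm
      · intro n hn
        rw [claim2] at hn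
        rw [Finset.mem_add] at hn
        obtain ⟨a, ha, b, hb, hab⟩ := hn
        rw [Finset.mem_add]
        exact ⟨a, ha, b, hsub hb, hab⟩
      · intro n hn
        rw [Finset.mem_add] at hn
        obtain ⟨a, ha, fb, hfb, hab⟩ := hn
        rw [Finset.mem_image] at hfb
        obtain ⟨b, hb, rfl⟩ := hfb
        rw [Finset.mem_inter] at ha
        have h1 : a + b ∈ X + Y := hABmem a ha.1 b hb
        have h2 := (hcomp _ h1).2
        have ha0 : a % g = 0 := by
          obtain ⟨k, hk⟩ := hYdvd a ha.2; subst hk; exact Nat.mul_mod_right g k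
        have hmod := hadd a (hAsub a ha.1) b (hBsub b hb)
        rw [ha0] at hmod
        have hmb := Nat.mod_le b g
        have : a + b - (a + b) % g = a + (b - b % g) := by omega
        rw [this] at h2
        rwa [← hab]
    have h0img : (0 : ℕ) ∈ B.image (fun n => n - n % g) :=
      Finset.mem_image.2 ⟨0, hB, by simp⟩
    exact hYc (A ∩ Y) (B.image (fun n => n - n % g)) (B ∩ Y) h0AY h0img h0BY hY1 claim2
  -- the hard direction
  have claim7 : ∀ x0 ∈ A ∩ X, ∀ y0 ∈ A ∩ Y, x0 + y0 ∈ A := by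
    intro x0 hx0 y0 hy0
    by_cases hy00 : y0 = 0
    · subst hy00
      rw [add_zero]
      exact (Finset.mem_inter.1 hx0).1
    obtain ⟨y2, hy2, huniq⟩ := unique_stratum Y (A ∩ Y) (B ∩ Y) hYc h0AY h0BY claim2
      y0 hy0 hy00
    -- fibers
    set F : Finset ℕ := (A.filter (fun a => a - a % g = y0)).image (· % g) with hF
    set G : Finset ℕ := (B.filter (fun b => b - b % g = y2)).image (· % g) with hG
    have hy0Y : y0 ∈ Y := (Finset.mem_inter.1 hy0).2
    have hy2Y : y2 ∈ Y := (Finset.mem_inter.1 hy2).2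
    have hy0A : y0 ∈ A := (Finset.mem_inter.1 hy0).1
    have hy2B : y2 ∈ B := (Finset.mem_inter.1 hy2).1
    have hyY : y0 + y2 ∈ Y := by
      rw [claim2]; exact Finset.add_mem_add hy0 hy2
    have hFsub : F ⊆ A ∩ X := by
      rw [← claimPiA]
      exact Finset.image_subset_image (Finset.filter_subset _ _)
    have hXFG : X = F + G := by
      apply Finset.Subset.antisymm
      · intro x hx
        have hn : x + (y0 + y2) ∈ X + Y := Finset.add_mem_add hx hyY
        rw [← hAB, Finset.mem_add] at hn
        obtain ⟨a, ha, b, hb, hab⟩ := hn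
        have hnmod : (x + (y0 + y2)) % g = x := hkey x hx _ hyY
        have hmod := hadd a (hAsub a ha) b (hBsub b hb)
        rw [hab, hnmod] at hmod
        -- q parts
        have hqa : a - a % g ∈ A ∩ Y := by
          rw [← claimQA]
          exact Finset.mem_image.2 ⟨a, ha, rfl⟩
        have hqb : b - b % g ∈ B ∩ Y := by
          rw [← claimQB]
          exact Finset.mem_image.2 ⟨b, hb, rfl⟩
        have hqsum : (a - a % g) + (b - b % g) = y0 + y2 := by
          have := Nat.mod_le a g
          have := Nat.mod_le b g
          omega
        have hqa0 : a - a % g = y0 := huniq _ hqa _ hqb hqsum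
        have hqb0 : b - b % g = y2 := by omega
        rw [Finset.mem_add]
        refine ⟨a % g, ?_, b % g, ?_, by omega⟩
        · exact Finset.mem_image.2 ⟨a, Finset.mem_filter.2 ⟨ha, hqa0⟩, rfl⟩
        · exact Finset.mem_image.2 ⟨b, Finset.mem_filter.2 ⟨hb, hqb0⟩, rfl⟩
      · intro n hn
        rw [Finset.mem_add] at hn
        obtain ⟨fa, hfa, fb, hfb, hab⟩ := hn
        rw [hF, Finset.mem_image] at hfa
        rw [hG, Finset.mem_image] at hfb
        obtain ⟨a, ha, rfl⟩ := hfa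
        obtain ⟨b, hb, rfl⟩ := hfb
        have ha' := (Finset.mem_filter.1 ha).1
        have hb' := (Finset.mem_filter.1 hb).1
        have h1 : a + b ∈ X + Y := hABmem a ha' b hb'
        have := (hcomp _ h1).1
        rw [hadd a (hAsub a ha') b (hBsub b hb')] at this
        rwa [← hab]
    have hXAG : X = (A ∩ X) + G := by
      apply Finset.Subset.antisymm
      · intro n hn
        rw [hXFG] at hn
        exact Finset.add_subset_add_right hFsub hn
      · intro n hn
        rw [Finset.mem_add] at hn
        obtain ⟨a, ha, fb, hfb, hab⟩ := hn
        rw [hG, Finset.mem_image] at hfb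
        obtain ⟨b, hb, rfl⟩ := hfb
        have hb' := (Finset.mem_filter.1 hb).1
        rw [Finset.mem_inter] at ha
        have h1 : a + b ∈ X + Y := hABmem a ha.1 b hb'
        have := (hcomp _ h1).1
        have ha0 : a % g = a := Nat.mod_eq_of_lt (hXlt a ha.2)
        rw [hadd a (hAsub a ha.1) b (hBsub b hb'), ha0] at this
        rwa [← hab]
    have h0G : (0 : ℕ) ∈ G := by
      rw [hG, Finset.mem_image]
      refine ⟨y2, Finset.mem_filter.2 ⟨hy2B, ?_⟩, ?_⟩
      · obtain ⟨k, hk⟩ := hYdvd y2 hy2Y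
        subst hk; rw [Nat.mul_mod_right]; omega
      · obtain ⟨k, hk⟩ := hYdvd y2 hy2Y
        subst hk; exact Nat.mul_mod_right g k
    have h0F : (0 : ℕ) ∈ F := by
      rw [hF, Finset.mem_image]
      refine ⟨y0, Finset.mem_filter.2 ⟨hy0A, ?_⟩, ?_⟩
      · obtain ⟨k, hk⟩ := hYdvd y0 hy0Y
        subst hk; rw [Nat.mul_mod_right]; omega
      · obtain ⟨k, hk⟩ := hYdvd y0 hy0Y
        subst hk; exact Nat.mul_mod_right g k
    have hFeq : F = A ∩ X :=
      hXc G F (A ∩ X) h0G h0F h0AX (by rw [add_comm G F]; exact hXFG)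
        (by rw [add_comm G (A ∩ X)]; exact hXAG)
    have : x0 ∈ F := hFeq ▸ hx0
    rw [hF, Finset.mem_image] at this
    obtain ⟨a, ha, hax⟩ := this
    have ha' := Finset.mem_filter.1 ha
    have : a = x0 + y0 := by
      have := Nat.mod_le a g
      omega
    exact this ▸ ha'.1
  -- Claim 8 : A = (A ∩ X) + (A ∩ Y)
  have claim8 : A = (A ∩ X) + (A ∩ Y) := by
    apply Finset.Subset.antisymm
    · intro a ha
      have h1 : a % g ∈ A ∩ X := by
        rw [← claimPiA]
        exact Finset.mem_image.2 ⟨a, ha, rfl⟩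
      have h2 : a - a % g ∈ A ∩ Y := by
        rw [← claimQA]
        exact Finset.mem_image.2 ⟨a, ha, rfl⟩
      rw [Finset.mem_add]
      exact ⟨a % g, h1, a - a % g, h2, hqadd a⟩
    · intro n hn
      rw [Finset.mem_add] at hn
      obtain ⟨x0, hx0, y0, hy0, hab⟩ := hn
      exact hab ▸ claim7 x0 hx0 y0 hy0
  exact ⟨claim1, claim2, claim8⟩
end

section
/- Let X, Y ∈ P_{fin,0}(ℕ₀) be relatively cancellative with gcd(Y) > 2·max(X). Then X + Y is relatively cancellative and the length set of X + Y equals the sumset of the length sets: L(X + Y) = L(X) + L(Y). -/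
open Pointwise

namespace RCAux

/-- the "low part" of a set: elements `≤ m`. -/
def grd (m : ℕ) (C : Finset ℕ) : Finset ℕ := C.filter (fun c => c ≤ m)

/-- the "high part" of a set: images `c - c % d`. -/
def hpart (d : ℕ) (C : Finset ℕ) : Finset ℕ := C.image (fun c => c - c % d)

open scoped Classical in
/-- elements of `C` whose high part can be completed by `G` to `k`, low parts taken. -/
noncomputable def Wset (d : ℕ) (G C : Finset ℕ) (k : ℕ) : Finset ℕ :=
  (C.filter (fun c => ∃ g ∈ G, g + (c - c % d) = k)).image (fun c => c % d)

/-- high parts of elements of `C` whose low part is `x`. -/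
def Sset (d : ℕ) (C : Finset ℕ) (x : ℕ) : Finset ℕ :=
  (C.filter (fun c => c % d = x)).image (fun c => c - c % d)

lemma mod_eq {d x y z : ℕ} (hx : x < d) (hy : d ∣ y) (hz : z = x + y) :
    z % d = x ∧ z - z % d = y := by
  obtain ⟨k, rfl⟩ := hy
  subst hz
  have h1 : (x + d * k) % d = x := by
    rw [Nat.add_mul_mod_self_left, Nat.mod_eq_of_lt hx]
  exact ⟨h1, by rw [h1, Nat.add_sub_cancel_left]⟩

lemma zero_mem_grd {m : ℕ} {C : Finset ℕ} (h : 0 ∈ C) : 0 ∈ grd m C :=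
  Finset.mem_filter.mpr ⟨h, Nat.zero_le m⟩

lemma zero_mem_hpart {d : ℕ} {C : Finset ℕ} (h : 0 ∈ C) : 0 ∈ hpart d C := by
  refine Finset.mem_image.mpr ⟨0, h, by simp⟩

lemma dvd_of_mem_hpart {d : ℕ} {C : Finset ℕ} {y : ℕ} (h : y ∈ hpart d C) : d ∣ y := by
  obtain ⟨c, _, rfl⟩ := Finset.mem_image.mp h
  exact Nat.dvd_sub_mod c

lemma le_of_mem_grd {m : ℕ} {C : Finset ℕ} {y : ℕ} (h : y ∈ grd m C) : y ≤ m :=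
  (Finset.mem_filter.mp h).2

lemma mem_of_mem_grd {m : ℕ} {C : Finset ℕ} {y : ℕ} (h : y ∈ grd m C) : y ∈ C :=
  (Finset.mem_filter.mp h).1

section Split

variable {X Y : Finset ℕ} {m d : ℕ}

lemma decomp (hmX : ∀ x ∈ X, x ≤ m) (hdY : ∀ y ∈ Y, d ∣ y) (hmd : 2 * m < d)
    {z : ℕ} (hz : z ∈ X + Y) : z % d ∈ X ∧ z - z % d ∈ Y := by
  rw [Finset.mem_add] at hz
  obtain ⟨x, hx, y, hy, rfl⟩ := hz
  have h := mod_eq (d := d) (x := x) (y := y)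
    (lt_of_le_of_lt (hmX x hx) (by omega)) (hdY y hy) rfl
  rw [h.2, h.1]
  exact ⟨hx, hy⟩

/-- The split-B lemma: if `X + Y = (F + G) + C` with `F` low and `G` high, then
`C` splits and the factorization respects the decomposition. -/
lemma splitB (hmX : ∀ x ∈ X, x ≤ m) (hdY : ∀ y ∈ Y, d ∣ y) (hmd : 2 * m < d)
    (hX0 : 0 ∈ X) (hY0 : 0 ∈ Y) (hXc : RelCancel X) (hYc : RelCancel Y)
    {F G C : Finset ℕ}
    (hF0 : 0 ∈ F) (hG0 : 0 ∈ G) (hC0 : 0 ∈ C)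
    (hFm : ∀ f ∈ F, f ≤ m) (hGd : ∀ g ∈ G, d ∣ g)
    (heq : X + Y = F + G + C) :
    C = grd m C + hpart d C ∧ X = F + grd m C ∧ Y = G + hpart d C := by
  have hdec : ∀ z, z ∈ X + Y → z % d ∈ X ∧ z - z % d ∈ Y :=
    fun z hz => decomp hmX hdY hmd hz
  -- every element of C lies in X + Y
  have hCXY : ∀ c ∈ C, c ∈ X + Y := by
    intro c hc
    have h := Finset.add_mem_add (Finset.add_mem_add hF0 hG0) hc
    rw [← heq] at h
    simpa using h
  have hCm : ∀ c ∈ C, c % d ≤ m := fun c hc => hmX _ (hdec c (hCXY c hc)).1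
  -- the key computation: parts of f + g + c
  have hkey : ∀ f ∈ F, ∀ g ∈ G, ∀ c ∈ C,
      f + c % d ∈ X ∧ g + (c - c % d) ∈ Y := by
    intro f hf g hg c hc
    have hfm := hFm f hf
    have hcm := hCm c hc
    have hcle := Nat.mod_le c d
    have hfgc : f + g + c ∈ X + Y := by
      rw [heq]; exact Finset.add_mem_add (Finset.add_mem_add hf hg) hc
    have hme := mod_eq (d := d) (x := f + c % d) (y := g + (c - c % d))
      (z := f + g + c)
      (by omega) (Nat.dvd_add (hGd g hg) (Nat.dvd_sub_mod c)) (by omega)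
    have h2 := hdec _ hfgc
    rw [hme.2, hme.1] at h2
    exact h2
  -- X = F + grd m C
  have hXF : X = F + grd m C := by
    apply Finset.ext
    intro z
    constructor
    · intro hz
      have hzm := hmX z hz
      have hzXY : z ∈ X + Y := by
        have h := Finset.add_mem_add hz hY0
        simpa using h
      rw [heq, Finset.mem_add] at hzXY
      obtain ⟨w, hw, c, hc, hwc⟩ := hzXY
      rw [Finset.mem_add] at hw
      obtain ⟨f, hf, g, hg, hfg⟩ := hw
      have hcle := Nat.mod_le c d
      have hcm := hCm c hc
      have hfm := hFm f hf
      have hme := mod_eq (d := d) (x := f + c % d) (y := g + (c - c % d))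
        (z := z)
        (by omega) (Nat.dvd_add (hGd g hg) (Nat.dvd_sub_mod c)) (by omega)
      have hme0 := mod_eq (d := d) (x := z) (y := 0) (z := z) (by omega) (dvd_zero d) (by omega)
      rw [hme0.1] at hme
      have hg0 : g = 0 ∧ c - c % d = 0 := by omega
      have hcc : c % d = c := by omega
      refine Finset.mem_add.mpr ⟨f, hf, c, Finset.mem_filter.mpr ⟨hc, by omega⟩, by omega⟩
    · intro hz
      rw [Finset.mem_add] at hz
      obtain ⟨f, hf, c, hc, rfl⟩ := hz
      have hcm := le_of_mem_grd hc
      have hc' := mem_of_mem_grd hc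
      have h := (hkey f hf 0 hG0 c hc').1
      have hcc : c % d = c := Nat.mod_eq_of_lt (by omega)
      rwa [hcc] at h
  -- 0 ∈ W k for k ∈ Y, and X = F + W k
  have hXW : ∀ k ∈ Y, X = F + Wset d G C k := by
    intro k hk
    apply Finset.ext
    intro z
    constructor
    · intro hz
      have hzm := hmX z hz
      have hzk : z + k ∈ X + Y := Finset.add_mem_add hz hk
      rw [heq, Finset.mem_add] at hzk
      obtain ⟨w, hw, c, hc, hwc⟩ := hzk
      rw [Finset.mem_add] at hw
      obtain ⟨f, hf, g, hg, hfg⟩ := hw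
      have hcle := Nat.mod_le c d
      have hcm := hCm c hc
      have hfm := hFm f hf
      have hme := mod_eq (d := d) (x := f + c % d) (y := g + (c - c % d))
        (z := z + k)
        (by omega) (Nat.dvd_add (hGd g hg) (Nat.dvd_sub_mod c)) (by omega)
      have hme0 := mod_eq (d := d) (x := z) (y := k) (z := z + k) (by omega) (hdY k hk) rfl
      have hzf : z = f + c % d := by omega
      have hkg : k = g + (c - c % d) := by omega
      refine Finset.mem_add.mpr ⟨f, hf, c % d, ?_, by omega⟩
      exact Finset.mem_image.mpr ⟨c, Finset.mem_filter.mpr ⟨hc, ⟨g, hg, hkg.symm⟩⟩, rfl⟩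
    · intro hz
      rw [Finset.mem_add] at hz
      obtain ⟨f, hf, w, hw, rfl⟩ := hz
      obtain ⟨c, hcf, rfl⟩ := Finset.mem_image.mp hw
      exact (hkey f hf 0 hG0 c (Finset.mem_of_mem_filter c hcf)).1
  have h0W : ∀ k ∈ Y, 0 ∈ Wset d G C k := by
    intro k hk
    have h := hXW k hk ▸ hX0
    rw [Finset.mem_add] at h
    obtain ⟨f, hf, w, hw, hfw⟩ := h
    have : w = 0 := by omega
    rwa [this] at hw
  -- cancel: W k = grd m C for all k ∈ Y
  have hWk : ∀ k ∈ Y, Wset d G C k = grd m C := by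
    intro k hk
    exact hXc F (Wset d G C k) (grd m C) hF0 (h0W k hk) (zero_mem_grd hC0)
      (hXW k hk) hXF
  -- low parts of elements of C are in grd m C
  have hlow : ∀ c ∈ C, c % d ∈ grd m C := by
    intro c hc
    have hk : c - c % d ∈ Y := (hdec c (hCXY c hc)).2
    rw [← hWk _ hk]
    exact Finset.mem_image.mpr ⟨c, Finset.mem_filter.mpr ⟨hc, ⟨0, hG0, by omega⟩⟩, rfl⟩
  -- Y = G + hpart d C
  have hYG : Y = G + hpart d C := by
    apply Finset.ext
    intro k
    constructor
    · intro hk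
      have h0 := h0W k hk
      obtain ⟨c, hcf, hc0⟩ := Finset.mem_image.mp h0
      obtain ⟨hcC, g, hg, hgk⟩ := Finset.mem_filter.mp hcf
      exact Finset.mem_add.mpr ⟨g, hg, c - c % d,
        Finset.mem_image.mpr ⟨c, hcC, rfl⟩, hgk⟩
    · intro hk
      rw [Finset.mem_add] at hk
      obtain ⟨g, hg, w, hw, rfl⟩ := hk
      obtain ⟨c, hcC, rfl⟩ := Finset.mem_image.mp hw
      exact (hkey 0 hF0 g hg c hcC).2
  -- Use RelCancel Y: for each low element a, a + (high part) ∈ C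
  have hrepl : ∀ a ∈ grd m C, ∀ b ∈ hpart d C, a + b ∈ C := by
    intro a ha b hb
    have haC := mem_of_mem_grd ha
    have ham := le_of_mem_grd ha
    have haa : a % d = a := Nat.mod_eq_of_lt (by omega)
    have hS0 : 0 ∈ Sset d C a := by
      refine Finset.mem_image.mpr ⟨a, Finset.mem_filter.mpr ⟨haC, haa⟩, by omega⟩
    have hYS : Y = G + Sset d C a := by
      apply Finset.ext
      intro k
      constructor
      · intro hk
        have haW : a ∈ Wset d G C k := by rw [hWk k hk]; exact ha
        obtain ⟨c, hcf, hca⟩ := Finset.mem_image.mp haW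
        obtain ⟨hcC, g, hg, hgk⟩ := Finset.mem_filter.mp hcf
        exact Finset.mem_add.mpr ⟨g, hg, c - c % d,
          Finset.mem_image.mpr ⟨c, Finset.mem_filter.mpr ⟨hcC, hca⟩, rfl⟩, hgk⟩
      · intro hk
        rw [Finset.mem_add] at hk
        obtain ⟨g, hg, w, hw, rfl⟩ := hk
        obtain ⟨c, hcf, rfl⟩ := Finset.mem_image.mp hw
        exact (hkey 0 hF0 g hg c (Finset.mem_of_mem_filter c hcf)).2
    have hSeq : hpart d C = Sset d C a :=
      hYc G (hpart d C) (Sset d C a) hG0 (zero_mem_hpart hC0) hS0 hYG hYS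
    rw [hSeq] at hb
    obtain ⟨c, hcf, hcb⟩ := Finset.mem_image.mp hb
    obtain ⟨hcC, hcla⟩ := Finset.mem_filter.mp hcf
    have hcle := Nat.mod_le c d
    have : a + b = c := by omega
    rwa [this]
  -- C = grd m C + hpart d C
  have hCsplit : C = grd m C + hpart d C := by
    apply Finset.ext
    intro z
    constructor
    · intro hz
      have hzle := Nat.mod_le z d
      exact Finset.mem_add.mpr ⟨z % d, hlow z hz, z - z % d,
        Finset.mem_image.mpr ⟨z, hz, rfl⟩, by omega⟩
    · intro hz
      rw [Finset.mem_add] at hz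
      obtain ⟨a, ha, b, hb, rfl⟩ := hz
      exact hrepl a ha b hb
  exact ⟨hCsplit, hXF, hYG⟩

/-- The master lemma: every factorization of `X + Y` splits. -/
lemma master (hmX : ∀ x ∈ X, x ≤ m) (hdY : ∀ y ∈ Y, d ∣ y) (hmd : 2 * m < d)
    (hX0 : 0 ∈ X) (hY0 : 0 ∈ Y) (hXc : RelCancel X) (hYc : RelCancel Y)
    {B C : Finset ℕ} (hB0 : 0 ∈ B) (hC0 : 0 ∈ C) (heq : X + Y = B + C) :
    B = grd m B + hpart d B ∧ C = grd m C + hpart d C ∧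
      X = grd m B + grd m C ∧ Y = hpart d B + hpart d C := by
  have hdec : ∀ z, z ∈ X + Y → z % d ∈ X ∧ z - z % d ∈ Y :=
    fun z hz => decomp hmX hdY hmd hz
  have hBXY : ∀ b ∈ B, b ∈ X + Y := by
    intro b hb
    have h := Finset.add_mem_add hb hC0
    rw [← heq] at h
    simpa using h
  have hCXY : ∀ c ∈ C, c ∈ X + Y := by
    intro c hc
    have h := Finset.add_mem_add hB0 hc
    rw [← heq] at h
    simpa using h
  have hkey2 : ∀ b ∈ B, ∀ c ∈ C,
      b % d + c % d ∈ X ∧ (b - b % d) + (c - c % d) ∈ Y := by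
    intro b hb c hc
    have hbm := hmX _ (hdec b (hBXY b hb)).1
    have hcm := hmX _ (hdec c (hCXY c hc)).1
    have hble := Nat.mod_le b d
    have hcle := Nat.mod_le c d
    have hbc : b + c ∈ X + Y := by rw [heq]; exact Finset.add_mem_add hb hc
    have hme := mod_eq (d := d) (x := b % d + c % d) (y := (b - b % d) + (c - c % d))
      (z := b + c)
      (by omega) (Nat.dvd_add (Nat.dvd_sub_mod b) (Nat.dvd_sub_mod c)) (by omega)
    have h2 := hdec _ hbc
    rw [hme.2, hme.1] at h2
    exact h2
  -- Step 1: X + Y = (image of low parts of B + hpart d B) + C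
  have heq1 : X + Y = (B.image (fun b => b % d) + hpart d B) + C := by
    apply Finset.ext
    intro z
    constructor
    · intro hz
      rw [heq, Finset.mem_add] at hz
      obtain ⟨b, hb, c, hc, rfl⟩ := hz
      have hble := Nat.mod_le b d
      refine Finset.mem_add.mpr ⟨b % d + (b - b % d), ?_, c, hc, by omega⟩
      exact Finset.add_mem_add (Finset.mem_image.mpr ⟨b, hb, rfl⟩)
        (Finset.mem_image.mpr ⟨b, hb, rfl⟩)
    · intro hz
      rw [Finset.mem_add] at hz
      obtain ⟨w, hw, c, hc, rfl⟩ := hz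
      rw [Finset.mem_add] at hw
      obtain ⟨u, hu, v, hv, rfl⟩ := hw
      obtain ⟨b, hb, rfl⟩ := Finset.mem_image.mp hu
      obtain ⟨b', hb', rfl⟩ := Finset.mem_image.mp hv
      have h1 := (hkey2 b hb c hc).1
      have h2 := (hkey2 b' hb' c hc).2
      have hcle := Nat.mod_le c d
      have : b % d + (b' - b' % d) + c
          = (b % d + c % d) + ((b' - b' % d) + (c - c % d)) := by omega
      rw [this]
      exact Finset.add_mem_add h1 h2
  have him0 : (0 : ℕ) ∈ B.image (fun b => b % d) :=
    Finset.mem_image.mpr ⟨0, hB0, by simp⟩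
  have himm : ∀ f ∈ B.image (fun b => b % d), f ≤ m := by
    intro f hf
    obtain ⟨b, hb, rfl⟩ := Finset.mem_image.mp hf
    exact hmX _ (hdec b (hBXY b hb)).1
  obtain ⟨hCs, hX1, hY1⟩ := splitB hmX hdY hmd hX0 hY0 hXc hYc
    him0 (zero_mem_hpart hB0) hC0 himm (fun g hg => dvd_of_mem_hpart hg) heq1
  -- Step 2: X + Y = (grd m C + hpart d C) + B
  have heq2 : X + Y = grd m C + hpart d C + B := by
    rw [heq, ← hCs, add_comm]
  obtain ⟨hBs, hX2, hY2⟩ := splitB hmX hdY hmd hX0 hY0 hXc hYc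
    (zero_mem_grd hC0) (zero_mem_hpart hC0) hB0
    (fun f hf => le_of_mem_grd hf) (fun g hg => dvd_of_mem_hpart hg) heq2
  exact ⟨hBs, hCs, by rw [hX2, add_comm], by rw [hY2, add_comm]⟩

end Split

lemma zero_mem_msum (t : Multiset (Finset ℕ)) (h : ∀ U ∈ t, (0 : ℕ) ∈ U) :
    (0 : ℕ) ∈ t.sum := by
  induction t using Multiset.induction_on with
  | empty => simp
  | cons U s ih =>
    rw [Multiset.sum_cons]
    have h0 : (0 : ℕ) + 0 ∈ U + s.sum :=
      Finset.add_mem_add (h U (Multiset.mem_cons_self U s))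
        (ih fun V hV => h V (Multiset.mem_cons_of_mem hV))
    simpa using h0

lemma dvd_msum (d : ℕ) (t : Multiset (Finset ℕ)) (h : ∀ U ∈ t, ∀ u ∈ U, d ∣ u) :
    ∀ q ∈ t.sum, d ∣ q := by
  induction t using Multiset.induction_on with
  | empty =>
    intro q hq
    have : q = 0 := by simpa using hq
    simp [this]
  | cons U s ih =>
    intro q hq
    rw [Multiset.sum_cons, Finset.mem_add] at hq
    obtain ⟨u, hu, w, hw, rfl⟩ := hq
    exact Nat.dvd_add (h U (Multiset.mem_cons_self U s) u hu)
      (ih (fun V hV => h V (Multiset.mem_cons_of_mem hV)) w hw)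

lemma gap_lemma (m : ℕ) (t : Multiset (Finset ℕ)) :
    (∀ U ∈ t, (0 : ℕ) ∈ U) → (∀ U ∈ t, ∀ u ∈ U, u ≤ m) →
    ∀ p ∈ t.sum, 0 < p → ∃ q ∈ t.sum, q < p ∧ p - q ≤ m := by
  induction t using Multiset.induction_on with
  | empty =>
    intro _ _ p hp hp0
    have : p = 0 := by simpa using hp
    omega
  | cons U s ih =>
    intro h0 hm p hp hp0
    rw [Multiset.sum_cons, Finset.mem_add] at hp
    obtain ⟨u, hu, w, hw, rfl⟩ := hp
    have h0U : (0 : ℕ) ∈ U := h0 U (Multiset.mem_cons_self U s)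
    by_cases hu0 : u = 0
    · subst hu0
      obtain ⟨q, hq, hq1, hq2⟩ := ih (fun V hV => h0 V (Multiset.mem_cons_of_mem hV))
        (fun V hV => hm V (Multiset.mem_cons_of_mem hV)) w hw (by omega)
      refine ⟨q, ?_, by omega, by omega⟩
      rw [Multiset.sum_cons]
      have := Finset.add_mem_add h0U hq
      simpa using this
    · refine ⟨w, ?_, by omega, ?_⟩
      · rw [Multiset.sum_cons]
        have := Finset.add_mem_add h0U hw
        simpa using this
      · have := hm U (Multiset.mem_cons_self U s) u hu
        omega

end RCAux

open RCAux in
theorem relCancel_add_lengthSet (X Y : Finset ℕ) (hX : 0 ∈ X) (hY : 0 ∈ Y)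
    (hXc : RelCancel X) (hYc : RelCancel Y) (hgcd : 2 * X.sup id < Y.gcd id) :
    RelCancel (X + Y) ∧ LengthSet (X + Y) = LengthSet X + LengthSet Y := by
  set m := X.sup id with hm
  set d := Y.gcd id with hd
  have hmX : ∀ x ∈ X, x ≤ m := fun x hx => Finset.le_sup (f := id) hx
  have hdY : ∀ y ∈ Y, d ∣ y := fun y hy => Finset.gcd_dvd hy
  constructor
  · -- relative cancellativity
    intro B C D hB0 hC0 hD0 h1 h2
    obtain ⟨hBs, hCs, hX1, hY1⟩ := master hmX hdY hgcd hX hY hXc hYc hB0 hC0 h1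
    obtain ⟨hBs', hDs, hX2, hY2⟩ := master hmX hdY hgcd hX hY hXc hYc hB0 hD0 h2
    have hg : grd m C = grd m D :=
      hXc (grd m B) (grd m C) (grd m D) (zero_mem_grd hB0) (zero_mem_grd hC0)
        (zero_mem_grd hD0) hX1 hX2
    have hh : hpart d C = hpart d D :=
      hYc (hpart d B) (hpart d C) (hpart d D) (zero_mem_hpart hB0)
        (zero_mem_hpart hC0) (zero_mem_hpart hD0) hY1 hY2
    rw [hCs, hDs, hg, hh]
  · -- length sets
    apply Set.Subset.antisymm
    · -- L(X+Y) ⊆ L(X) + L(Y)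
      rintro n ⟨l, hcard, hatoms, hsum⟩
      have h0mem : ∀ U ∈ l, (0 : ℕ) ∈ U := fun U hU => (hatoms U hU).1
      -- every atom in the factorization is low or high
      have hclass : ∀ U ∈ l, (∀ u ∈ U, u ≤ m) ∨ (∀ u ∈ U, d ∣ u) := by
        intro U hU
        have heqU : X + Y = U + (l.erase U).sum := by
          rw [← hsum]
          conv_lhs => rw [← Multiset.cons_erase hU]
          rw [Multiset.sum_cons]
        have h0e : (0 : ℕ) ∈ (l.erase U).sum :=
          zero_mem_msum _ (fun V hV => h0mem V (Multiset.mem_of_mem_erase hV))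
        obtain ⟨hUs, _, _, _⟩ := master hmX hdY hgcd hX hY hXc hYc
          (h0mem U hU) h0e heqU
        rcases (hatoms U hU).2.2 (grd m U) (hpart d U)
            (zero_mem_grd (h0mem U hU)) (zero_mem_hpart (h0mem U hU)) hUs with hg | hh
        · right
          intro u hu
          rw [hUs, hg] at hu
          have hu' : u ∈ hpart d U := by
            have : ({0} : Finset ℕ) + hpart d U = hpart d U := zero_add _
            rwa [this] at hu
          exact dvd_of_mem_hpart hu'
        · left
          intro u hu
          rw [hUs, hh] at hu
          have hu' : u ∈ grd m U := by
            have : grd m U + ({0} : Finset ℕ) = grd m U := add_zero _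
            rwa [this] at hu
          exact le_of_mem_grd hu'
      classical
      set p : Finset ℕ → Prop := fun U => ∀ u ∈ U, u ≤ m with hp
      set l1 := l.filter p with hl1
      set l2 := l.filter (fun U => ¬ p U) with hl2
      have hfl : l1 + l2 = l := Multiset.filter_add_not p l
      have hsum12 : X + Y = l1.sum + l2.sum := by
        rw [← Multiset.sum_add, hfl, hsum]
      have hl1mem : ∀ U ∈ l1, U ∈ l := fun U hU => Multiset.mem_of_mem_filter hU
      have hl2mem : ∀ U ∈ l2, U ∈ l := fun U hU => Multiset.mem_of_mem_filter hU
      have hl1low : ∀ U ∈ l1, ∀ u ∈ U, u ≤ m := fun U hU => Multiset.of_mem_filter hU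
      have hl2high : ∀ U ∈ l2, ∀ u ∈ U, d ∣ u := by
        intro U hU
        have hnp : ¬ p U := Multiset.of_mem_filter (p := fun U => ¬ p U) hU
        rcases hclass U (hl2mem U hU) with h | h
        · exact absurd h hnp
        · exact h
      set P := l1.sum with hP
      set Q := l2.sum with hQ
      have h0P : (0 : ℕ) ∈ P := zero_mem_msum _ (fun V hV => h0mem V (hl1mem V hV))
      have h0Q : (0 : ℕ) ∈ Q := zero_mem_msum _ (fun V hV => h0mem V (hl2mem V hV))
      have hQD : ∀ q ∈ Q, d ∣ q := dvd_msum d l2 hl2high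
      obtain ⟨hPs, hQs, hXe, hYe⟩ := master hmX hdY hgcd hX hY hXc hYc h0P h0Q hsum12
      -- grd m Q = {0}
      have hgQ : grd m Q = ({0} : Finset ℕ) := by
        apply Finset.ext
        intro q
        simp only [Finset.mem_singleton]
        constructor
        · intro hq
          have h1 := le_of_mem_grd hq
          have h2 := hQD q (mem_of_mem_grd hq)
          obtain ⟨k, rfl⟩ := h2
          rcases Nat.eq_zero_or_pos k with hk | hk
          · simp [hk]
          · have : d ≤ d * k := Nat.le_mul_of_pos_right d hk
            omega
        · rintro rfl
          exact zero_mem_grd h0Q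
      have hXP : X = grd m P := by
        rw [hXe, hgQ]
        exact add_zero _
      have hPX : P = X + hpart d P := by
        conv_lhs => rw [hPs]
        rw [← hXP]
      -- hpart d P = {0} via the gap lemma
      have hPXY : ∀ b ∈ P, b ∈ X + Y := by
        intro b hb
        have h := Finset.add_mem_add hb h0Q
        rw [← hsum12] at h
        simpa using h
      have hPh : hpart d P = ({0} : Finset ℕ) := by
        apply Finset.ext
        intro y
        simp only [Finset.mem_singleton]
        constructor
        · intro hy
          by_contra hy0
          have hdy : d ∣ y := dvd_of_mem_hpart hy
          have hyd : d ≤ y := Nat.le_of_dvd (Nat.pos_of_ne_zero hy0) hdy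
          have hyP : y ∈ P := by
            have h := Finset.add_mem_add hX hy
            rw [← hPX] at h
            simpa using h
          set T := P.filter (fun q => m < q) with hT
          have hTne : T.Nonempty := ⟨y, Finset.mem_filter.mpr ⟨hyP, by omega⟩⟩
          set ps := T.min' hTne with hps
          have hpsT : ps ∈ T := T.min'_mem hTne
          have hpsP : ps ∈ P := (Finset.mem_filter.mp hpsT).1
          have hpsm : m < ps := (Finset.mem_filter.mp hpsT).2
          obtain ⟨q, hq, hq1, hq2⟩ := gap_lemma m l1
            (fun V hV => h0mem V (hl1mem V hV)) hl1low ps hpsP (by omega)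
          have hqm : q ≤ m := by
            by_contra hqm
            have : ps ≤ q := T.min'_le q (Finset.mem_filter.mpr ⟨hq, by omega⟩)
            omega
          have hpsd : ps < d := by omega
          -- but ps ∈ X + hpart d P forces ps ≥ d or ps ≤ m
          have hps' : ps ∈ X + hpart d P := by rw [← hPX]; exact hpsP
          rw [Finset.mem_add] at hps'
          obtain ⟨x, hx, y', hy', hxy⟩ := hps'
          have hxm := hmX x hx
          rcases Nat.eq_zero_or_pos y' with h0 | h0
          · omega
          · have : d ≤ y' := Nat.le_of_dvd h0 (dvd_of_mem_hpart hy')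
            omega
        · rintro rfl
          exact zero_mem_hpart h0P
      have hPfin : P = X := by
        rw [hPX, hPh]
        exact add_zero _
      have hQfin : Q = Y := by
        have h1 : Y = hpart d Q := by
          rw [hYe, hPh]
          exact zero_add _
        have h2 : Q = hpart d Q := by
          conv_lhs => rw [hQs]
          rw [hgQ]
          exact zero_add _
        rw [h2, ← h1]
      have hL1 : Multiset.card l1 ∈ LengthSet X :=
        ⟨l1, rfl, fun U hU => hatoms U (hl1mem U hU), hPfin⟩
      have hL2 : Multiset.card l2 ∈ LengthSet Y :=
        ⟨l2, rfl, fun U hU => hatoms U (hl2mem U hU), hQfin⟩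
      have hn : Multiset.card l1 + Multiset.card l2 = n := by
        rw [← Multiset.card_add, hfl, hcard]
      rw [← hn]
      exact Set.add_mem_add hL1 hL2
    · -- L(X) + L(Y) ⊆ L(X+Y)
      intro n hn
      rw [Set.mem_add] at hn
      obtain ⟨n1, hn1, n2, hn2, rfl⟩ := hn
      obtain ⟨l1, hc1, ha1, hs1⟩ := hn1
      obtain ⟨l2, hc2, ha2, hs2⟩ := hn2
      refine ⟨l1 + l2, ?_, ?_, ?_⟩
      · rw [Multiset.card_add, hc1, hc2]
      · intro U hU
        rcases Multiset.mem_add.mp hU with h | h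
        · exact ha1 U h
        · exact ha2 U h
      · rw [Multiset.sum_add, hs1, hs2]
end

section
/- Let X, Y ∈ P_{fin,0}(ℕ₀) be relatively cancellative. Then there exists a relatively cancellative W ∈ P_{fin,0}(ℕ₀) such that L(W) = L(X) + L(Y). -/
open Pointwise

section Helpers

private lemma fzero : (0 : Finset ℕ) = {0} := rfl

private lemma scale_add (k : ℕ) (A B : Finset ℕ) :
    (A + B).image (k * ·) = A.image (k * ·) + B.image (k * ·) := by
  ext x
  simp only [Finset.mem_image, Finset.mem_add]
  constructor
  · rintro ⟨w, ⟨a, ha, b, hb, rfl⟩, rfl⟩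
    exact ⟨k * a, ⟨a, ha, rfl⟩, k * b, ⟨b, hb, rfl⟩, (Nat.mul_add k a b).symm⟩
  · rintro ⟨_, ⟨a, ha, rfl⟩, _, ⟨b, hb, rfl⟩, rfl⟩
    exact ⟨a + b, ⟨a, ha, b, hb, rfl⟩, Nat.mul_add k a b⟩

private def scaleHom (k : ℕ) : Finset ℕ →+ Finset ℕ where
  toFun S := S.image (k * ·)
  map_zero' := by simp [fzero]
  map_add' := scale_add k

private lemma zero_mem_sum (l : Multiset (Finset ℕ)) (h : ∀ U ∈ l, (0 : ℕ) ∈ U) :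
    (0 : ℕ) ∈ l.sum := by
  induction l using Multiset.induction with
  | empty => simp [fzero]
  | cons U l ih =>
    rw [Multiset.sum_cons]
    have h2 := ih fun V hV => h V (Multiset.mem_cons_of_mem hV)
    simpa using Finset.add_mem_add (h U (Multiset.mem_cons_self U l)) h2

private lemma relCancel_of_div (X P Q : Finset ℕ) (hXc : RelCancel X) (h0P : 0 ∈ P)
    (h : X = P + Q) : RelCancel Q := by
  intro B C D h0B h0C h0D h1 h2
  refine hXc (P + B) C D (by simpa using Finset.add_mem_add h0P h0B) h0C h0D ?_ ?_
  · rw [h, h1, add_assoc]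
  · rw [h, h2, add_assoc]

private lemma scale_eq_singleton {k : ℕ} (hk : 0 < k) {A : Finset ℕ}
    (h : A.image (k * ·) = {0}) : A = {0} := by
  have hinj : Function.Injective (Finset.image ((k * ·) : ℕ → ℕ)) :=
    Finset.image_injective fun a b hab => Nat.eq_of_mul_eq_mul_left hk hab
  apply hinj
  rw [h]
  simp

private lemma atom_scale {k : ℕ} (hk : 0 < k) {V : Finset ℕ} :
    IsAtomP V ↔ IsAtomP (V.image (k * ·)) := by
  have hinj : Function.Injective (Finset.image ((k * ·) : ℕ → ℕ)) :=
    Finset.image_injective fun a b hab => Nat.eq_of_mul_eq_mul_left hk hab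
  constructor
  · rintro ⟨h0, hne, hsplit⟩
    refine ⟨Finset.mem_image.2 ⟨0, h0, mul_zero k⟩, ?_, ?_⟩
    · intro h
      exact hne (scale_eq_singleton hk h)
    · intro A B h0A h0B hAB
      have hAsub : A ⊆ V.image (k * ·) := by
        intro a ha
        rw [hAB]
        simpa using Finset.add_mem_add ha h0B
      have hBsub : B ⊆ V.image (k * ·) := by
        intro b hb
        rw [hAB]
        simpa using Finset.add_mem_add h0A hb
      have hdvd : ∀ a ∈ V.image (k * ·), k * (a / k) = a := by
        rintro a ha
        rcases Finset.mem_image.1 ha with ⟨v, _, rfl⟩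
        rw [Nat.mul_div_cancel_left v hk]
      have hA : A = (A.image (· / k)).image (k * ·) := by
        ext a
        simp only [Finset.mem_image]
        constructor
        · intro ha
          exact ⟨a / k, ⟨a, ha, rfl⟩, hdvd a (hAsub ha)⟩
        · rintro ⟨_, ⟨a', ha', rfl⟩, rfl⟩
          rwa [hdvd a' (hAsub ha')]
      have hB : B = (B.image (· / k)).image (k * ·) := by
        ext b
        simp only [Finset.mem_image]
        constructor
        · intro hb
          exact ⟨b / k, ⟨b, hb, rfl⟩, hdvd b (hBsub hb)⟩
        · rintro ⟨_, ⟨b', hb', rfl⟩, rfl⟩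
          rwa [hdvd b' (hBsub hb')]
      have hVd : V = A.image (· / k) + B.image (· / k) := by
        apply hinj
        rw [scale_add, ← hA, ← hB]
        exact hAB
      have h0A' : 0 ∈ A.image (· / k) := Finset.mem_image.2 ⟨0, h0A, Nat.zero_div k⟩
      have h0B' : 0 ∈ B.image (· / k) := Finset.mem_image.2 ⟨0, h0B, Nat.zero_div k⟩
      rcases hsplit _ _ h0A' h0B' hVd with h | h
      · left; rw [hA, h]; simp
      · right; rw [hB, h]; simp
  · rintro ⟨h0, hne, hsplit⟩
    rcases Finset.mem_image.1 h0 with ⟨v, hv, hv0⟩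
    have hv' : v = 0 := by
      rcases Nat.mul_eq_zero.1 hv0 with h | h <;> omega
    refine ⟨hv' ▸ hv, ?_, ?_⟩
    · rintro rfl
      apply hne
      simp
    · intro A B h0A h0B hV
      rcases hsplit (A.image (k * ·)) (B.image (k * ·))
          (Finset.mem_image.2 ⟨0, h0A, mul_zero k⟩) (Finset.mem_image.2 ⟨0, h0B, mul_zero k⟩)
          (by rw [hV, scale_add]) with h | h
      · exact Or.inl (scale_eq_singleton hk h)
      · exact Or.inr (scale_eq_singleton hk h)

end Helpers

section Split

private lemma split_lemma (m : ℕ) (X Y B C : Finset ℕ)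
    (hXm : ∀ x ∈ X, x ≤ m) (h0X : 0 ∈ X) (h0Y : 0 ∈ Y)
    (hXc : RelCancel X) (hYc : RelCancel Y)
    (h0B : 0 ∈ B) (h0C : 0 ∈ C)
    (hW : X + Y.image ((2 * m + 1) * ·) = B + C) :
    B.image (· % (2 * m + 1)) + C.image (· % (2 * m + 1)) = X ∧
    B.image (· / (2 * m + 1)) + C.image (· / (2 * m + 1)) = Y ∧
    C = C.image (· % (2 * m + 1)) + (C.image (· / (2 * m + 1))).image ((2 * m + 1) * ·) ∧
    C.image (· % (2 * m + 1)) ⊆ X ∧ C.image (· / (2 * m + 1)) ⊆ Y := by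
  set k := 2 * m + 1 with hkdef
  have hkpos : 0 < k := by omega
  -- representation lemma
  have rep : ∀ x ∈ X, ∀ y : ℕ, (x + k * y) % k = x ∧ (x + k * y) / k = y := by
    intro x hx y
    have hxm := hXm x hx
    constructor
    · rw [Nat.add_mul_mod_self_left]
      exact Nat.mod_eq_of_lt (by omega)
    · rw [Nat.add_mul_div_left _ _ hkpos, Nat.div_eq_of_lt (by omega), zero_add]
  have memW : ∀ w ∈ X + Y.image (k * ·), w % k ∈ X ∧ w / k ∈ Y := by
    intro w hw
    rcases Finset.mem_add.1 hw with ⟨x, hx, z, hz, rfl⟩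
    rcases Finset.mem_image.1 hz with ⟨y, hy, rfl⟩
    rw [(rep x hx y).1, (rep x hx y).2]
    exact ⟨hx, hy⟩
  have memBC : ∀ w ∈ B + C, w % k ∈ X ∧ w / k ∈ Y := fun w hw =>
    memW w (by rw [hW]; exact hw)
  have memB : ∀ b ∈ B, b % k ∈ X ∧ b / k ∈ Y := fun b hb =>
    memBC b (by simpa using Finset.add_mem_add hb h0C)
  have memC : ∀ c ∈ C, c % k ∈ X ∧ c / k ∈ Y := fun c hc =>
    memBC c (by simpa using Finset.add_mem_add h0B hc)
  have addmod : ∀ b ∈ B, ∀ c ∈ C,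
      (b + c) % k = b % k + c % k ∧ (b + c) / k = b / k + c / k := by
    intro b hb c hc
    have hbm : b % k ≤ m := hXm _ (memB b hb).1
    have hcm : c % k ≤ m := hXm _ (memC c hc).1
    have hb' : b = b % k + k * (b / k) := (Nat.mod_add_div b k).symm
    have hc' : c = c % k + k * (c / k) := (Nat.mod_add_div c k).symm
    have hsum : b + c = (b % k + c % k) + k * (b / k + c / k) := by
      conv_lhs => rw [hb', hc']
      ring
    constructor
    · rw [hsum, Nat.add_mul_mod_self_left]
      exact Nat.mod_eq_of_lt (by omega)
    · rw [hsum, Nat.add_mul_div_left _ _ hkpos, Nat.div_eq_of_lt (by omega), zero_add]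
  -- zero memberships
  have h0lowB : 0 ∈ B.image (· % k) := Finset.mem_image.2 ⟨0, h0B, Nat.zero_mod k⟩
  have h0lowC : 0 ∈ C.image (· % k) := Finset.mem_image.2 ⟨0, h0C, Nat.zero_mod k⟩
  have h0highB : 0 ∈ B.image (· / k) := Finset.mem_image.2 ⟨0, h0B, Nat.zero_div k⟩
  have h0highC : 0 ∈ C.image (· / k) := Finset.mem_image.2 ⟨0, h0C, Nat.zero_div k⟩
  -- low sums
  have lowsum : B.image (· % k) + C.image (· % k) = X := by
    apply Finset.Subset.antisymm
    · intro x hx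
      rcases Finset.mem_add.1 hx with ⟨a, ha, a', ha', rfl⟩
      rcases Finset.mem_image.1 ha with ⟨b, hb, rfl⟩
      rcases Finset.mem_image.1 ha' with ⟨c, hc, rfl⟩
      rw [← (addmod b hb c hc).1]
      exact (memBC (b + c) (Finset.add_mem_add hb hc)).1
    · intro x hx
      have hxW : x ∈ B + C := by
        have h1 : x + k * 0 ∈ X + Y.image (k * ·) :=
          Finset.add_mem_add hx (Finset.mem_image.2 ⟨0, h0Y, rfl⟩)
        rw [hW] at h1
        simpa using h1
      rcases Finset.mem_add.1 hxW with ⟨b, hb, c, hc, hbc⟩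
      have hx2 : x = b % k + c % k := by
        have hmx : x % k = x := Nat.mod_eq_of_lt (by have := hXm x hx; omega)
        rw [← hmx, ← hbc, (addmod b hb c hc).1]
      rw [hx2]
      exact Finset.add_mem_add (Finset.mem_image.2 ⟨b, hb, rfl⟩) (Finset.mem_image.2 ⟨c, hc, rfl⟩)
  have highsum : B.image (· / k) + C.image (· / k) = Y := by
    apply Finset.Subset.antisymm
    · intro y hy
      rcases Finset.mem_add.1 hy with ⟨a, ha, a', ha', rfl⟩
      rcases Finset.mem_image.1 ha with ⟨b, hb, rfl⟩
      rcases Finset.mem_image.1 ha' with ⟨c, hc, rfl⟩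
      rw [← (addmod b hb c hc).2]
      exact (memBC (b + c) (Finset.add_mem_add hb hc)).2
    · intro y hy
      have hyW : 0 + k * y ∈ B + C := by
        rw [← hW]
        exact Finset.add_mem_add h0X (Finset.mem_image.2 ⟨y, hy, rfl⟩)
      rcases Finset.mem_add.1 hyW with ⟨b, hb, c, hc, hbc⟩
      have hy2 : y = b / k + c / k := by
        rw [← (rep 0 h0X y).2, ← hbc, (addmod b hb c hc).2]
      rw [hy2]
      exact Finset.add_mem_add (Finset.mem_image.2 ⟨b, hb, rfl⟩) (Finset.mem_image.2 ⟨c, hc, rfl⟩)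
  -- the key claim: for every y ∈ Y, the slice union over decompositions of y is all of low C
  have Syfull : ∀ y ∈ Y,
      (C.filter fun c => ∃ b ∈ B, b / k + c / k = y).image (· % k) = C.image (· % k) := by
    intro y hy
    set Sy := (C.filter fun c => ∃ b ∈ B, b / k + c / k = y).image (· % k) with hSydef
    have hXSy : X = B.image (· % k) + Sy := by
      apply Finset.Subset.antisymm
      · intro x hx
        have hxW : x + k * y ∈ B + C := by
          rw [← hW]
          exact Finset.add_mem_add hx (Finset.mem_image.2 ⟨y, hy, rfl⟩)
        rcases Finset.mem_add.1 hxW with ⟨b, hb, c, hc, hbc⟩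
        have h1 : b % k + c % k = x := by
          rw [← (addmod b hb c hc).1, hbc, (rep x hx y).1]
        have h2 : b / k + c / k = y := by
          rw [← (addmod b hb c hc).2, hbc, (rep x hx y).2]
        rw [← h1]
        exact Finset.add_mem_add (Finset.mem_image.2 ⟨b, hb, rfl⟩)
          (Finset.mem_image.2 ⟨c, Finset.mem_filter.2 ⟨hc, b, hb, h2⟩, rfl⟩)
      · calc B.image (· % k) + Sy ⊆ B.image (· % k) + C.image (· % k) :=
              Finset.add_subset_add_left (Finset.image_subset_image (Finset.filter_subset _ C))
          _ = X := lowsum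
    have h0Sy : 0 ∈ Sy := by
      have h1 := hXSy ▸ h0X
      rcases Finset.mem_add.1 h1 with ⟨a, _, s, hs, has⟩
      have : s = 0 := by omega
      rwa [← this]
    exact (hXc (B.image (· % k)) Sy (C.image (· % k)) h0lowB h0Sy h0lowC hXSy lowsum.symm).symm ▸ rfl
  -- C splits
  have Csplit : C = C.image (· % k) + (C.image (· / k)).image (k * ·) := by
    apply Finset.Subset.antisymm
    · intro c hc
      rw [← Nat.mod_add_div c k]
      exact Finset.add_mem_add (Finset.mem_image.2 ⟨c, hc, rfl⟩)
        (Finset.mem_image.2 ⟨c / k, Finset.mem_image.2 ⟨c, hc, rfl⟩, rfl⟩)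
    · intro w hw
      rcases Finset.mem_add.1 hw with ⟨s, hs, z, hz, rfl⟩
      rcases Finset.mem_image.1 hs with ⟨c₀, hc₀, rfl⟩
      rcases Finset.mem_image.1 hz with ⟨γ, hγ, rfl⟩
      -- Q_s argument
      set Qs := (C.filter fun c => c % k = c₀ % k).image (· / k) with hQsdef
      have hYQs : Y = B.image (· / k) + Qs := by
        apply Finset.Subset.antisymm
        · intro y hy
          have hmem : c₀ % k ∈ (C.filter fun c => ∃ b ∈ B, b / k + c / k = y).image (· % k) := by
            rw [Syfull y hy]
            exact Finset.mem_image.2 ⟨c₀, hc₀, rfl⟩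
          rcases Finset.mem_image.1 hmem with ⟨c, hcf, hceq⟩
          rcases Finset.mem_filter.1 hcf with ⟨hcC, b, hb, hby⟩
          rw [← hby]
          exact Finset.add_mem_add (Finset.mem_image.2 ⟨b, hb, rfl⟩)
            (Finset.mem_image.2 ⟨c, Finset.mem_filter.2 ⟨hcC, hceq⟩, rfl⟩)
        · calc B.image (· / k) + Qs ⊆ B.image (· / k) + C.image (· / k) :=
                Finset.add_subset_add_left (Finset.image_subset_image (Finset.filter_subset _ C))
            _ = Y := highsum
      have h0Qs : 0 ∈ Qs := by
        have h1 := hYQs ▸ h0Y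
        rcases Finset.mem_add.1 h1 with ⟨a, _, q, hq, haq⟩
        have : q = 0 := by omega
        rwa [← this]
      have hQs : Qs = C.image (· / k) :=
        hYc (B.image (· / k)) Qs (C.image (· / k)) h0highB h0Qs h0highC hYQs highsum.symm
      rw [← hQs] at hγ
      rcases Finset.mem_image.1 hγ with ⟨c, hcf, hcγ⟩
      rcases Finset.mem_filter.1 hcf with ⟨hcC, hcs⟩
      have : c₀ % k + k * γ = c := by
        rw [← hcs, ← hcγ, Nat.mod_add_div]
      rwa [this]
  exact ⟨lowsum, highsum, Csplit, fun x hx => by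
    rcases Finset.mem_image.1 hx with ⟨c, hc, rfl⟩; exact (memC c hc).1,
    fun y hy => by rcases Finset.mem_image.1 hy with ⟨c, hc, rfl⟩; exact (memC c hc).2⟩

end Split

section Main

private lemma W_relCancel (m : ℕ) (X Y : Finset ℕ)
    (hXm : ∀ x ∈ X, x ≤ m) (h0X : 0 ∈ X) (h0Y : 0 ∈ Y)
    (hXc : RelCancel X) (hYc : RelCancel Y) :
    RelCancel (X + Y.image ((2 * m + 1) * ·)) := by
  intro B C D h0B h0C h0D h1 h2
  obtain ⟨lowC, highC, hC, -, -⟩ :=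
    split_lemma m X Y B C hXm h0X h0Y hXc hYc h0B h0C h1
  obtain ⟨lowD, highD, hD, -, -⟩ :=
    split_lemma m X Y B D hXm h0X h0Y hXc hYc h0B h0D h2
  set k := 2 * m + 1
  have h0lowB : 0 ∈ B.image (· % k) := Finset.mem_image.2 ⟨0, h0B, Nat.zero_mod k⟩
  have h0highB : 0 ∈ B.image (· / k) := Finset.mem_image.2 ⟨0, h0B, Nat.zero_div k⟩
  have h0lowC : 0 ∈ C.image (· % k) := Finset.mem_image.2 ⟨0, h0C, Nat.zero_mod k⟩
  have h0lowD : 0 ∈ D.image (· % k) := Finset.mem_image.2 ⟨0, h0D, Nat.zero_mod k⟩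
  have h0highC : 0 ∈ C.image (· / k) := Finset.mem_image.2 ⟨0, h0C, Nat.zero_div k⟩
  have h0highD : 0 ∈ D.image (· / k) := Finset.mem_image.2 ⟨0, h0D, Nat.zero_div k⟩
  have hlow : C.image (· % k) = D.image (· % k) :=
    hXc (B.image (· % k)) _ _ h0lowB h0lowC h0lowD lowC.symm lowD.symm
  have hhigh : C.image (· / k) = D.image (· / k) :=
    hYc (B.image (· / k)) _ _ h0highB h0highC h0highD highC.symm highD.symm
  rw [hC, hD, hlow, hhigh]

private lemma length_sub (m : ℕ) : ∀ (n : ℕ) (X Y : Finset ℕ), (∀ x ∈ X, x ≤ m) → 0 ∈ X →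
    0 ∈ Y → RelCancel X → RelCancel Y → ∀ l : Multiset (Finset ℕ), Multiset.card l = n →
    (∀ U ∈ l, IsAtomP U) → l.sum = X + Y.image ((2 * m + 1) * ·) →
    ∃ n1 n2 : ℕ, n1 + n2 = n ∧ n1 ∈ LengthSet X ∧ n2 ∈ LengthSet Y := by
  intro n
  induction n with
  | zero =>
    intro X Y hXm h0X h0Y hXc hYc l hcard hatoms hsum
    have hl : l = 0 := Multiset.card_eq_zero.1 hcard
    rw [hl, Multiset.sum_zero] at hsum
    have hX : X = {0} := by
      apply Finset.Subset.antisymm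
      · intro x hx
        have : x + (2 * m + 1) * 0 ∈ X + Y.image ((2 * m + 1) * ·) :=
          Finset.add_mem_add hx (Finset.mem_image.2 ⟨0, h0Y, rfl⟩)
        rw [← hsum] at this
        simpa using this
      · simpa using h0X
    have hY : Y = {0} := by
      apply Finset.Subset.antisymm
      · intro y hy
        have : 0 + (2 * m + 1) * y ∈ X + Y.image ((2 * m + 1) * ·) :=
          Finset.add_mem_add h0X (Finset.mem_image.2 ⟨y, hy, rfl⟩)
        rw [← hsum] at this
        simp only [fzero, Finset.mem_singleton, zero_add] at this
        simp only [Finset.mem_singleton]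
        rcases Nat.mul_eq_zero.1 this with h | h <;> omega
      · simpa using h0Y
    exact ⟨0, 0, rfl, ⟨0, rfl, by simp, by rw [Multiset.sum_zero, fzero, hX]⟩,
      ⟨0, rfl, by simp, by rw [Multiset.sum_zero, fzero, hY]⟩⟩
  | succ n ih =>
    intro X Y hXm h0X h0Y hXc hYc l hcard hatoms hsum
    set k := 2 * m + 1 with hkdef
    have hkpos : 0 < k := by omega
    have hlne : l ≠ 0 := by
      intro h
      rw [h] at hcard
      simp at hcard
    obtain ⟨U, hU⟩ := Multiset.exists_mem_of_ne_zero hlne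
    set l' := l.erase U with hl'def
    have hcons : U ::ₘ l' = l := Multiset.cons_erase hU
    have hcard' : Multiset.card l' = n := by
      have := congrArg Multiset.card hcons
      rw [Multiset.card_cons] at this
      omega
    have hatoms' : ∀ V ∈ l', IsAtomP V := fun V hV => hatoms V (Multiset.mem_of_mem_erase hV)
    have hUatom : IsAtomP U := hatoms U hU
    have h0U : 0 ∈ U := hUatom.1
    have h0C : (0:ℕ) ∈ l'.sum := zero_mem_sum l' fun V hV => (hatoms' V hV).1
    have hsum' : U + l'.sum = X + Y.image (k * ·) := by
      rw [← Multiset.sum_cons, hcons]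
      exact hsum
    obtain ⟨lowsum, highsum, Csplit, hlowsub, hhighsub⟩ :=
      split_lemma m X Y U l'.sum hXm h0X h0Y hXc hYc h0U h0C hsum'.symm
    obtain ⟨-, -, Usplit, -, -⟩ :=
      split_lemma m X Y l'.sum U hXm h0X h0Y hXc hYc h0C h0U
        (hsum'.symm.trans (add_comm U l'.sum))
    set X' := l'.sum.image (· % k) with hX'def
    set Y' := l'.sum.image (· / k) with hY'def
    have h0X' : 0 ∈ X' := Finset.mem_image.2 ⟨0, h0C, Nat.zero_mod k⟩
    have h0Y' : 0 ∈ Y' := Finset.mem_image.2 ⟨0, h0C, Nat.zero_div k⟩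
    have h0lowU : 0 ∈ U.image (· % k) := Finset.mem_image.2 ⟨0, h0U, Nat.zero_mod k⟩
    have h0highU : 0 ∈ U.image (· / k) := Finset.mem_image.2 ⟨0, h0U, Nat.zero_div k⟩
    have h0ihighU : 0 ∈ (U.image (· / k)).image (k * ·) :=
      Finset.mem_image.2 ⟨0, h0highU, mul_zero k⟩
    have hX'm : ∀ x ∈ X', x ≤ m := fun x hx => hXm x (hlowsub hx)
    have hX'c : RelCancel X' := relCancel_of_div X (U.image (· % k)) X' hXc h0lowU lowsum.symm
    have hY'c : RelCancel Y' := relCancel_of_div Y (U.image (· / k)) Y' hYc h0highU highsum.symm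
    obtain ⟨n1, n2, hn12, h1, h2⟩ := ih X' Y' hX'm h0X' h0Y' hX'c hY'c l' hcard' hatoms' Csplit
    rcases hUatom.2.2 (U.image (· % k)) ((U.image (· / k)).image (k * ·))
        h0lowU h0ihighU Usplit with hcase | hcase
    · -- low part of U is {0} : U is a scaled atom, contributes to Y
      have hXX' : X = X' := by
        rw [← lowsum, hcase, ← fzero, zero_add]
      have hUeq : U = (U.image (· / k)).image (k * ·) := by
        conv_lhs => rw [Usplit]
        rw [hcase, ← fzero, zero_add]
      have hatomhighU : IsAtomP (U.image (· / k)) := by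
        rw [atom_scale hkpos, ← hUeq]
        exact hUatom
      obtain ⟨l2, hc2, ha2, hs2⟩ := h2
      refine ⟨n1, n2 + 1, by omega, hXX' ▸ h1, ⟨U.image (· / k) ::ₘ l2, by simp [hc2], ?_, ?_⟩⟩
      · intro V hV
        rcases Multiset.mem_cons.1 hV with h | h
        · rw [h]; exact hatomhighU
        · exact ha2 V h
      · rw [Multiset.sum_cons, hs2, highsum]
    · -- high part of U is {0} : U is an atom of the X side
      have hhighU : U.image (· / k) = {0} := by
        apply Finset.Subset.antisymm
        · intro γ hγ
          have : k * γ ∈ ((U.image (· / k)).image (k * ·)) := Finset.mem_image.2 ⟨γ, hγ, rfl⟩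
          rw [hcase, Finset.mem_singleton] at this
          simp only [Finset.mem_singleton]
          rcases Nat.mul_eq_zero.1 this with h | h <;> omega
        · simpa using h0highU
      have hYY' : Y = Y' := by
        rw [← highsum, hhighU, ← fzero, zero_add]
      have hUeq : U = U.image (· % k) := by
        conv_lhs => rw [Usplit]
        rw [hcase, ← fzero, add_zero]
      have hatomlowU : IsAtomP (U.image (· % k)) := hUeq ▸ hUatom
      obtain ⟨l1, hc1, ha1, hs1⟩ := h1
      refine ⟨n1 + 1, n2, by omega, ⟨U.image (· % k) ::ₘ l1, by simp [hc1], ?_, ?_⟩, hYY' ▸ h2⟩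
      · intro V hV
        rcases Multiset.mem_cons.1 hV with h | h
        · rw [h]; exact hatomlowU
        · exact ha1 V h
      · rw [Multiset.sum_cons, hs1, lowsum]

private lemma length_sup {k : ℕ} (hk : 0 < k) (X Y : Finset ℕ) {n1 n2 : ℕ}
    (h1 : n1 ∈ LengthSet X) (h2 : n2 ∈ LengthSet Y) :
    n1 + n2 ∈ LengthSet (X + Y.image (k * ·)) := by
  obtain ⟨l1, hc1, ha1, hs1⟩ := h1
  obtain ⟨l2, hc2, ha2, hs2⟩ := h2
  refine ⟨l1 + l2.map (scaleHom k), by simp [hc1, hc2], ?_, ?_⟩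
  · intro V hV
    rcases Multiset.mem_add.1 hV with h | h
    · exact ha1 V h
    · obtain ⟨V', hV', rfl⟩ := Multiset.mem_map.1 h
      exact (atom_scale hk).1 (ha2 V' hV')
  · rw [Multiset.sum_add, hs1, ← map_multiset_sum, hs2]
    rfl

end Main


theorem lengthSet_sumset_realized (X Y : Finset ℕ) (hX : 0 ∈ X) (hY : 0 ∈ Y)
    (hXc : RelCancel X) (hYc : RelCancel Y) :
    ∃ W : Finset ℕ, 0 ∈ W ∧ RelCancel W ∧ LengthSet W = LengthSet X + LengthSet Y := by
  set m := X.sup id with hmdef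
  have hXm : ∀ x ∈ X, x ≤ m := fun x hx => Finset.le_sup (f := id) hx
  have hkpos : 0 < 2 * m + 1 := by omega
  refine ⟨X + Y.image ((2 * m + 1) * ·), ?_, W_relCancel m X Y hXm hX hY hXc hYc, ?_⟩
  · simpa using Finset.add_mem_add hX (Finset.mem_image.2 ⟨0, hY, mul_zero _⟩)
  · ext n
    constructor
    · rintro ⟨l, hcard, hatoms, hsum⟩
      obtain ⟨n1, n2, hn12, h1, h2⟩ :=
        length_sub m n X Y hXm hX hY hXc hYc l hcard hatoms hsum
      exact Set.mem_add.2 ⟨n1, h1, n2, h2, hn12⟩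
    · intro hn
      rcases Set.mem_add.1 hn with ⟨n1, h1, n2, h2, rfl⟩
      exact length_sup hkpos X Y h1 h2
end

section
/- Let X ∈ P_{fin,0}(ℕ₀) be such that any two factorizations of X into atoms which share a common atom are equal (up to reordering). Then X is relatively cancellative. -/
open Pointwise

lemma zero_finset_eq : ({0} : Finset ℕ) = 0 := rfl

lemma exists_fact (n : ℕ) : ∀ S : Finset ℕ, ∀ h0 : 0 ∈ S, S.max' ⟨0, h0⟩ ≤ n →
    ∃ l : Multiset (Finset ℕ), (∀ U ∈ l, IsAtomP U) ∧ l.sum = S := by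
  induction n using Nat.strong_induction_on with
  | _ n ih =>
    intro S h0 hmax
    by_cases hS : S = {0}
    · exact ⟨0, by simp, by simp [hS, zero_finset_eq]⟩
    by_cases hatom : IsAtomP S
    · exact ⟨{S}, by simpa, by simp⟩
    · have : ¬ ∀ A B : Finset ℕ, 0 ∈ A → 0 ∈ B → S = A + B → A = {0} ∨ B = {0} := by
        intro hall; exact hatom ⟨h0, hS, hall⟩
      push_neg at this
      obtain ⟨A, B, hA0, hB0, hAB, hA, hB⟩ := this
      -- nonzero elements
      have hex : ∀ T : Finset ℕ, 0 ∈ T → T ≠ {0} → ∃ t ∈ T, t ≠ 0 := by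
        intro T h0T hT
        by_contra hc
        push_neg at hc
        exact hT (Finset.ext fun x => ⟨fun hx => by simp [hc x hx],
          fun hx => by simp at hx; simpa [hx] using h0T⟩)
      obtain ⟨a, haA, ha⟩ := hex A hA0 hA
      obtain ⟨b, hbB, hb⟩ := hex B hB0 hB
      have hmaxA : A.max' ⟨0, hA0⟩ < S.max' ⟨0, h0⟩ := by
        refine (Finset.max'_lt_iff _ _).mpr ?_
        intro x hx
        have : x + b ∈ S := hAB ▸ Finset.add_mem_add hx hbB
        have := Finset.le_max' S _ this
        omega
      have hmaxB : B.max' ⟨0, hB0⟩ < S.max' ⟨0, h0⟩ := by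
        refine (Finset.max'_lt_iff _ _).mpr ?_
        intro x hx
        have : a + x ∈ S := hAB ▸ Finset.add_mem_add haA hx
        have := Finset.le_max' S _ this
        omega
      obtain ⟨lA, hlA, hlAs⟩ := ih (A.max' ⟨0, hA0⟩) (by omega) A hA0 le_rfl
      obtain ⟨lB, hlB, hlBs⟩ := ih (B.max' ⟨0, hB0⟩) (by omega) B hB0 le_rfl
      refine ⟨lA + lB, ?_, by simp [hlAs, hlBs, hAB]⟩
      intro U hU
      rcases Multiset.mem_add.mp hU with h' | h'
      · exact hlA U h'
      · exact hlB U h'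

lemma exists_fact' (S : Finset ℕ) (h0 : 0 ∈ S) :
    ∃ l : Multiset (Finset ℕ), (∀ U ∈ l, IsAtomP U) ∧ l.sum = S :=
  exists_fact _ S h0 le_rfl

theorem relCancel_of_factorizations (X : Finset ℕ) (hX : 0 ∈ X)
    (h : ∀ l m : Multiset (Finset ℕ),
      (∀ U ∈ l, IsAtomP U) → l.sum = X →
      (∀ U ∈ m, IsAtomP U) → m.sum = X →
      (∃ U : Finset ℕ, U ∈ l ∧ U ∈ m) → l = m) :
    RelCancel X := by
  intro B C D hB hC hD h1 h2
  by_cases hB0 : B = {0}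
  · subst hB0
    rw [zero_finset_eq, zero_add] at h1 h2
    rw [← h1, ← h2]
  obtain ⟨lB, hlB, hlBs⟩ := exists_fact' B hB
  obtain ⟨lC, hlC, hlCs⟩ := exists_fact' C hC
  obtain ⟨lD, hlD, hlDs⟩ := exists_fact' D hD
  have hlBne : lB ≠ 0 := by
    rintro rfl
    simp at hlBs
    exact hB0 (by rw [← hlBs]; rfl)
  obtain ⟨U, hU⟩ := Multiset.exists_mem_of_ne_zero hlBne
  have key : lB + lC = lB + lD := by
    apply h
    · intro V hV; rcases Multiset.mem_add.mp hV with h' | h'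
      · exact hlB V h'
      · exact hlC V h'
    · simp [hlBs, hlCs, ← h1]
    · intro V hV; rcases Multiset.mem_add.mp hV with h' | h'
      · exact hlB V h'
      · exact hlD V h'
    · simp [hlBs, hlDs, ← h2]
    · exact ⟨U, Multiset.mem_add.mpr (Or.inl hU), Multiset.mem_add.mpr (Or.inl hU)⟩
  have : lC = lD := add_left_cancel key
  rw [← hlCs, ← hlDs, this]
end

section
/- In P_{fin,0}(ℕ₀), the sets A = {0,1,2,3}, B = {0,7} satisfy: A + B has length set {2,3,4}, while L(A) + L(B) = {3,4}; in particular L(A + B) ≠ L(A) + L(B). -/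
open Pointwise

namespace ExAB

lemma subset_add {A B : Finset ℕ} (hB : 0 ∈ B) : A ⊆ A + B := fun a ha =>
  Finset.mem_add.2 ⟨a, ha, 0, hB, add_zero a⟩

lemma zero_mem_sum {l : Multiset (Finset ℕ)} (h : ∀ U ∈ l, (0:ℕ) ∈ U) : (0:ℕ) ∈ l.sum := by
  induction l using Multiset.induction with
  | empty => simp [Finset.zero_mem_zero]
  | cons U t ih =>
      rw [Multiset.sum_cons]
      have h0 : (0:ℕ) ∈ U := h U (Multiset.mem_cons_self U t)
      have ht : (0:ℕ) ∈ t.sum := ih fun V hV => h V (Multiset.mem_cons_of_mem hV)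
      exact Finset.mem_add.2 ⟨0, h0, 0, ht, add_zero 0⟩

lemma sup_add (A B : Finset ℕ) (hA : A.Nonempty) (hB : B.Nonempty) :
    (A + B).sup id = A.sup id + B.sup id := by
  apply le_antisymm
  · apply Finset.sup_le
    intro y hy
    obtain ⟨a, ha, b, hb, rfl⟩ := Finset.mem_add.1 hy
    exact add_le_add (Finset.le_sup (f := id) ha) (Finset.le_sup (f := id) hb)
  · obtain ⟨a, ha, rfl⟩ := Finset.exists_mem_eq_sup A hA id
    obtain ⟨b, hb, rfl⟩ := Finset.exists_mem_eq_sup B hB id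
    exact Finset.le_sup (f := id) (Finset.add_mem_add ha hb)

lemma sum_sup {l : Multiset (Finset ℕ)} (h : ∀ U ∈ l, (0:ℕ) ∈ U) :
    l.sum.sup id = (l.map (fun U => U.sup id)).sum := by
  induction l using Multiset.induction with
  | empty => simp
  | cons U t ih =>
      have ht : ∀ V ∈ t, (0:ℕ) ∈ V := fun V hV => h V (Multiset.mem_cons_of_mem hV)
      rw [Multiset.sum_cons, Multiset.map_cons, Multiset.sum_cons,
        sup_add U t.sum ⟨0, h U (Multiset.mem_cons_self U t)⟩ ⟨0, zero_mem_sum ht⟩, ih ht]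

lemma card_le_mapsum {l : Multiset (Finset ℕ)} (h : ∀ U ∈ l, 1 ≤ U.sup id) :
    Multiset.card l ≤ (l.map (fun U => U.sup id)).sum := by
  induction l using Multiset.induction with
  | empty => simp
  | cons U t ih =>
      rw [Multiset.map_cons, Multiset.sum_cons, Multiset.card_cons]
      have := ih fun V hV => h V (Multiset.mem_cons_of_mem hV)
      have := h U (Multiset.mem_cons_self U t)
      omega

lemma atom_of_check (X : Finset ℕ) (h0 : 0 ∈ X) (hne : X ≠ {0})
    (h : ∀ A ∈ X.powerset, ∀ B ∈ X.powerset, 0 ∈ A → 0 ∈ B → X = A + B →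
      A = {0} ∨ B = {0}) : IsAtomP X := by
  refine ⟨h0, hne, fun A B hA hB hX => ?_⟩
  have hAX : A ⊆ X := by rw [hX]; exact subset_add hB
  have hBX : B ⊆ X := by rw [hX, add_comm]; exact subset_add hA
  exact h A (Finset.mem_powerset.2 hAX) B (Finset.mem_powerset.2 hBX) hA hB hX

lemma atom01 : IsAtomP {0,1} := atom_of_check _ (by decide) (by decide) (by decide)
lemma atom02 : IsAtomP {0,2} := atom_of_check _ (by decide) (by decide) (by decide)
lemma atom07 : IsAtomP {0,7} := atom_of_check _ (by decide) (by decide) (by decide)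
lemma atomBig : IsAtomP {0,1,2,7,9} := atom_of_check _ (by decide) (by decide) (by decide)

lemma atom_sup_pos {U : Finset ℕ} (h : IsAtomP U) : 1 ≤ U.sup id := by
  obtain ⟨h0, hne, -⟩ := h
  by_contra hlt
  apply hne
  apply Finset.Subset.antisymm
  · intro u hu
    have h2 : id u ≤ U.sup id := Finset.le_sup hu
    simp only [id_eq] at h2
    have : u = 0 := by omega
    simp [this]
  · intro u hu
    simp at hu; simp [hu, h0]

/-- Every member of an atom factorization, with the rest of the sum. -/
lemma member_div {l : Multiset (Finset ℕ)} (h : ∀ U ∈ l, IsAtomP U) {U : Finset ℕ}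
    (hU : U ∈ l) : U ⊆ l.sum := by
  have hrest : (0:ℕ) ∈ ((l.erase U).sum) :=
    zero_mem_sum fun V hV => (h V (Multiset.mem_of_mem_erase hV)).1
  calc U ⊆ U + (l.erase U).sum := subset_add hrest
    _ = l.sum := by conv_rhs => rw [← Multiset.cons_erase hU, Multiset.sum_cons]

lemma pair_div {l : Multiset (Finset ℕ)} (h : ∀ U ∈ l, IsAtomP U) {U V : Finset ℕ}
    (hU : U ∈ l) (hV : V ∈ l.erase U) : U + V ⊆ l.sum := by
  have hrest : (0:ℕ) ∈ (((l.erase U).erase V).sum) :=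
    zero_mem_sum fun W hW =>
      (h W (Multiset.mem_of_mem_erase (Multiset.mem_of_mem_erase hW))).1
  calc U + V ⊆ U + V + ((l.erase U).erase V).sum := subset_add hrest
    _ = l.sum := by
        conv_rhs => rw [← Multiset.cons_erase hU, Multiset.sum_cons,
          ← Multiset.cons_erase hV, Multiset.sum_cons]
        rw [add_assoc]

end ExAB

namespace ExAB

lemma subsum {m l : Multiset (Finset ℕ)} (h : ∀ U ∈ l, (0:ℕ) ∈ U) (hm : m ≤ l) :
    m.sum ⊆ l.sum := by
  obtain ⟨t, rfl⟩ := Multiset.le_iff_exists_add.1 hm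
  rw [Multiset.sum_add]
  exact subset_add (zero_mem_sum fun V hV =>
    h V (Multiset.mem_add.2 (Or.inr hV)))

lemma atom_exists_pos {U : Finset ℕ} (h : IsAtomP U) : ∃ u ∈ U, 1 ≤ u := by
  obtain ⟨u, hu, hueq⟩ := Finset.exists_mem_eq_sup U ⟨0, h.1⟩ id
  exact ⟨u, hu, by have := atom_sup_pos h; simp only [id_eq] at hueq; omega⟩

lemma small_atom {U : Finset ℕ} (h : IsAtomP U) (hs : U ⊆ {0,1}) : U = {0,1} := by
  obtain ⟨u, hu, hu1⟩ := atom_exists_pos h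
  have : u = 1 := by have := hs hu; simp at this; omega
  subst this
  apply Finset.Subset.antisymm hs
  intro x hx
  simp at hx
  rcases hx with rfl | rfl
  · exact h.1
  · exact hu

lemma sum_erase_decomp {l : Multiset (Finset ℕ)} {U : Finset ℕ} (hU : U ∈ l) :
    l.sum = U + (l.erase U).sum := by
  conv_lhs => rw [← Multiset.cons_erase hU, Multiset.sum_cons]

lemma mapsum_erase_decomp {l : Multiset (Finset ℕ)} {U : Finset ℕ} (hU : U ∈ l) :
    (l.map (fun V => V.sup id)).sum
      = U.sup id + ((l.erase U).map (fun V => V.sup id)).sum := by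
  conv_lhs => rw [← Multiset.cons_erase hU, Multiset.map_cons, Multiset.sum_cons]

lemma LB : LengthSet {0,7} = {1} := by
  ext n
  simp only [LengthSet, Set.mem_setOf_eq, Set.mem_singleton_iff]
  constructor
  · rintro ⟨l, rfl, hat, hsum⟩
    have hz : ∀ U ∈ l, (0:ℕ) ∈ U := fun U hU => (hat U hU).1
    by_contra hne
    rcases Nat.lt_or_ge (Multiset.card l) 1 with h | h
    · have hl : l = 0 := Multiset.card_eq_zero.1 (by omega)
      subst hl
      exact absurd hsum (by decide)
    · have h2 : 2 ≤ Multiset.card l := by omega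
      obtain ⟨U, hU⟩ := Multiset.card_pos_iff_exists_mem.1
        (show 0 < Multiset.card l by omega)
      have hce : 0 < Multiset.card (l.erase U) := by
        rw [Multiset.card_erase_of_mem hU, Nat.pred_eq_sub_one]; omega
      obtain ⟨V, hV⟩ := Multiset.card_pos_iff_exists_mem.1 hce
      obtain ⟨u, hu, hu1⟩ := atom_exists_pos (hat U hU)
      obtain ⟨v, hv, hv1⟩ := atom_exists_pos (hat V (Multiset.mem_of_mem_erase hV))
      have huS : u ∈ ({0,7} : Finset ℕ) := hsum ▸ member_div hat hU hu
      have hvS : v ∈ ({0,7} : Finset ℕ) := hsum ▸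
        member_div hat (Multiset.mem_of_mem_erase hV) hv
      have huvS : u + v ∈ ({0,7} : Finset ℕ) := hsum ▸
        pair_div hat hU hV (Finset.add_mem_add hu hv)
      simp only [Finset.mem_insert, Finset.mem_singleton] at huS hvS huvS
      omega
  · rintro rfl
    refine ⟨{({0,7} : Finset ℕ)}, by simp, ?_, by simp⟩
    intro U hU
    rw [Multiset.mem_singleton] at hU
    subst hU
    exact atom07

lemma LA : LengthSet {0,1,2,3} = {2,3} := by
  ext n
  simp only [LengthSet, Set.mem_setOf_eq, Set.mem_insert_iff, Set.mem_singleton_iff]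
  constructor
  · rintro ⟨l, rfl, hat, hsum⟩
    have hz : ∀ U ∈ l, (0:ℕ) ∈ U := fun U hU => (hat U hU).1
    have hsup : (l.map (fun V => V.sup id)).sum = 3 := by
      rw [← sum_sup hz, hsum]; decide
    have hcard : Multiset.card l ≤ 3 := by
      rw [← hsup]
      exact card_le_mapsum fun U hU => atom_sup_pos (hat U hU)
    have h0 : Multiset.card l ≠ 0 := by
      intro h
      rw [Multiset.card_eq_zero.1 h] at hsum
      exact absurd hsum (by decide)
    have h1 : Multiset.card l ≠ 1 := by
      intro h
      obtain ⟨U, rfl⟩ := Multiset.card_eq_one.1 h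
      rw [Multiset.sum_singleton] at hsum
      subst hsum
      have := hat _ (Multiset.mem_singleton_self _)
      rcases this.2.2 {0,1} {0,2} (by decide) (by decide) (by decide) with h | h <;>
        exact absurd h (by decide)
    omega
  · rintro (rfl | rfl)
    · refine ⟨{0,1} ::ₘ {({0,2} : Finset ℕ)}, by simp, ?_, ?_⟩
      · intro U hU
        simp only [Multiset.mem_cons, Multiset.mem_singleton] at hU
        rcases hU with rfl | rfl
        · exact atom01
        · exact atom02
      · rw [Multiset.sum_cons, Multiset.sum_singleton]; decide
    · refine ⟨{0,1} ::ₘ {0,1} ::ₘ {({0,1} : Finset ℕ)}, by simp, ?_, ?_⟩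
      · intro U hU
        simp only [Multiset.mem_cons, Multiset.mem_singleton] at hU
        rcases hU with rfl | rfl | rfl <;> exact atom01
      · rw [Multiset.sum_cons, Multiset.sum_cons, Multiset.sum_singleton]; decide

lemma mem_S_ge {u : ℕ} (hu : u ∈ ({0,1,2,3,7,8,9,10} : Finset ℕ))
    (h4 : 4 ≤ u) : 7 ≤ u ∧ u ≤ 10 := by
  simp only [Finset.mem_insert, Finset.mem_singleton] at hu
  omega

lemma LS : LengthSet {0,1,2,3,7,8,9,10} = {2,3,4} := by
  ext n
  simp only [LengthSet, Set.mem_setOf_eq, Set.mem_insert_iff, Set.mem_singleton_iff]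
  constructor
  · rintro ⟨l, rfl, hat, hsum⟩
    have hz : ∀ U ∈ l, (0:ℕ) ∈ U := fun U hU => (hat U hU).1
    have h0 : Multiset.card l ≠ 0 := by
      intro h
      rw [Multiset.card_eq_zero.1 h] at hsum
      exact absurd hsum (by decide)
    have h1 : Multiset.card l ≠ 1 := by
      intro h
      obtain ⟨U, rfl⟩ := Multiset.card_eq_one.1 h
      rw [Multiset.sum_singleton] at hsum
      subst hsum
      have := hat _ (Multiset.mem_singleton_self _)
      rcases this.2.2 {0,1,2,3} {0,7} (by decide) (by decide) (by decide) with h | h <;>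
        exact absurd h (by decide)
    have hsup : (l.map (fun V => V.sup id)).sum = 10 := by
      rw [← sum_sup hz, hsum]; decide
    have hcard : Multiset.card l ≤ 4 := by
      by_cases hbig : ∃ V ∈ l, ¬ V ⊆ ({0,1,2,3} : Finset ℕ)
      · -- one atom reaches beyond 3; all others are ⊆ {0,1,2,3}
        obtain ⟨V, hVl, hVn⟩ := hbig
        obtain ⟨v, hv, hv4⟩ := Finset.not_subset.1 hVn
        have hvS : v ∈ ({0,1,2,3,7,8,9,10} : Finset ℕ) := hsum ▸ member_div hat hVl hv
        have hv7 : 7 ≤ v := by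
          refine (mem_S_ge hvS ?_).1
          by_contra h4
          apply hv4
          simp only [Finset.mem_insert, Finset.mem_singleton] at hvS ⊢
          omega
        have hVsup : 7 ≤ V.sup id := le_trans hv7 (Finset.le_sup (f := id) hv)
        have herase : ∀ U ∈ l.erase V, U.sup id ≤ 3 := by
          intro U hU
          by_contra hU3
          obtain ⟨u, hu, hueq⟩ :=
            Finset.exists_mem_eq_sup U ⟨0, hz U (Multiset.mem_of_mem_erase hU)⟩ id
          simp only [id_eq] at hueq
          have huS : u ∈ ({0,1,2,3,7,8,9,10} : Finset ℕ) := hsum ▸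
            member_div hat (Multiset.mem_of_mem_erase hU) hu
          have hu7 : 7 ≤ u := (mem_S_ge huS (by omega)).1
          have : v + u ∈ ({0,1,2,3,7,8,9,10} : Finset ℕ) := hsum ▸
            pair_div hat hVl hU (Finset.add_mem_add hv hu)
          simp only [Finset.mem_insert, Finset.mem_singleton] at this
          omega
        have hdec := mapsum_erase_decomp (l := l) hVl
        have hesum : ((l.erase V).map (fun W => W.sup id)).sum ≤ 3 := by omega
        have hecard : Multiset.card (l.erase V)
            ≤ ((l.erase V).map (fun W => W.sup id)).sum :=
          card_le_mapsum fun U hU => atom_sup_pos (hat U (Multiset.mem_of_mem_erase hU))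
        have := Multiset.card_erase_of_mem hVl
        rw [Nat.pred_eq_sub_one] at this
        omega
      · -- all atoms ⊆ {0,1,2,3}
        push_neg at hbig
        by_contra hk
        -- we find four copies of {0,1} inside l
        have hrep : Multiset.replicate 4 ({0,1} : Finset ℕ) ≤ l := by
          by_cases hmid : ∃ W ∈ l, ¬ W ⊆ ({0,1} : Finset ℕ)
          · obtain ⟨W, hWl, hWn⟩ := hmid
            obtain ⟨w, hw, hw1⟩ := Finset.not_subset.1 hWn
            have hw23 : 2 ≤ w ∧ w ≤ 3 := by
              have := hbig W hWl hw
              simp only [Finset.mem_insert, Finset.mem_singleton] at this hw1 ⊢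
              omega
            have hesmall : ∀ U ∈ l.erase W, U = ({0,1} : Finset ℕ) := by
              intro U hU
              refine small_atom (hat U (Multiset.mem_of_mem_erase hU)) ?_
              intro u hu
              by_contra hu1
              have hu23 : 2 ≤ u ∧ u ≤ 3 := by
                have := hbig U (Multiset.mem_of_mem_erase hU) hu
                simp only [Finset.mem_insert, Finset.mem_singleton] at this hu1 ⊢
                omega
              have : w + u ∈ ({0,1,2,3,7,8,9,10} : Finset ℕ) := hsum ▸
                pair_div hat hWl hU (Finset.add_mem_add hw hu)
              simp only [Finset.mem_insert, Finset.mem_singleton] at this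
              omega
            have heq : l.erase W
                = Multiset.replicate (Multiset.card (l.erase W)) ({0,1} : Finset ℕ) :=
              Multiset.eq_replicate_card.2 hesmall
            have hce : 4 ≤ Multiset.card (l.erase W) := by
              have := Multiset.card_erase_of_mem hWl
              rw [Nat.pred_eq_sub_one] at this
              omega
            calc Multiset.replicate 4 ({0,1} : Finset ℕ)
                ≤ Multiset.replicate (Multiset.card (l.erase W)) ({0,1} : Finset ℕ) :=
                  (Multiset.replicate_le_replicate _).2 hce
              _ = l.erase W := heq.symm
              _ ≤ l := Multiset.erase_le W l
          · push_neg at hmid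
            have hall : ∀ U ∈ l, U = ({0,1} : Finset ℕ) := fun U hU =>
              small_atom (hat U hU) (hmid U hU)
            have heq : l = Multiset.replicate (Multiset.card l) ({0,1} : Finset ℕ) :=
              Multiset.eq_replicate_card.2 hall
            rw [heq]
            exact (Multiset.replicate_le_replicate _).2 (by omega)
        have h4mem : (4:ℕ) ∈ (Multiset.replicate 4 ({0,1} : Finset ℕ)).sum := by decide
        have : (4:ℕ) ∈ ({0,1,2,3,7,8,9,10} : Finset ℕ) :=
          hsum ▸ subsum hz hrep h4mem
        simp at this
    omega
  · rintro (rfl | rfl | rfl)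
    · refine ⟨{0,1,2,7,9} ::ₘ {({0,1} : Finset ℕ)}, by simp, ?_, ?_⟩
      · intro U hU
        simp only [Multiset.mem_cons, Multiset.mem_singleton] at hU
        rcases hU with rfl | rfl
        · exact atomBig
        · exact atom01
      · rw [Multiset.sum_cons, Multiset.sum_singleton]; decide
    · refine ⟨{0,1} ::ₘ {0,2} ::ₘ {({0,7} : Finset ℕ)}, by simp, ?_, ?_⟩
      · intro U hU
        simp only [Multiset.mem_cons, Multiset.mem_singleton] at hU
        rcases hU with rfl | rfl | rfl
        · exact atom01
        · exact atom02
        · exact atom07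
      · rw [Multiset.sum_cons, Multiset.sum_cons, Multiset.sum_singleton]; decide
    · refine ⟨{0,1} ::ₘ {0,1} ::ₘ {0,1} ::ₘ {({0,7} : Finset ℕ)}, by simp, ?_, ?_⟩
      · intro U hU
        simp only [Multiset.mem_cons, Multiset.mem_singleton] at hU
        rcases hU with rfl | rfl | rfl | rfl
        · exact atom01
        · exact atom01
        · exact atom01
        · exact atom07
      · rw [Multiset.sum_cons, Multiset.sum_cons, Multiset.sum_cons,
          Multiset.sum_singleton]
        decide

end ExAB

theorem example_A_B :
    LengthSet (({0, 1, 2, 3} : Finset ℕ) + ({0, 7} : Finset ℕ)) = {2, 3, 4} ∧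
    LengthSet ({0, 1, 2, 3} : Finset ℕ) + LengthSet ({0, 7} : Finset ℕ) = {3, 4} ∧
    LengthSet (({0, 1, 2, 3} : Finset ℕ) + ({0, 7} : Finset ℕ)) ≠
      LengthSet ({0, 1, 2, 3} : Finset ℕ) + LengthSet ({0, 7} : Finset ℕ) := by
  have hAB : ({0, 1, 2, 3} : Finset ℕ) + ({0, 7} : Finset ℕ)
      = ({0,1,2,3,7,8,9,10} : Finset ℕ) := by decide
  have h1 : LengthSet (({0, 1, 2, 3} : Finset ℕ) + ({0, 7} : Finset ℕ)) = {2, 3, 4} := by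
    rw [hAB, ExAB.LS]
  have h2 : LengthSet ({0, 1, 2, 3} : Finset ℕ) + LengthSet ({0, 7} : Finset ℕ)
      = {3, 4} := by
    rw [ExAB.LA, ExAB.LB]
    ext n
    simp only [Set.mem_add, Set.mem_insert_iff, Set.mem_singleton_iff]
    constructor
    · rintro ⟨x, hx, y, hy, rfl⟩
      omega
    · rintro (rfl | rfl)
      · exact ⟨2, Or.inl rfl, 1, rfl, rfl⟩
      · exact ⟨3, Or.inr rfl, 1, rfl, rfl⟩
  refine ⟨h1, h2, ?_⟩
  rw [h1, h2]
  intro h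
  have : (2:ℕ) ∈ ({3,4} : Set ℕ) := h ▸ (by simp : (2:ℕ) ∈ ({2,3,4} : Set ℕ))
  simp at this
end

section
/- Let (n_j), (D_j) be defined by n_0 = 0, D_0 = {0,1}, and for i ≥ 0, n_{i+1} ≥ 3·max(D_i), D_{i+1} = D_i + {0, 1 + n_{i+1}}. Then for each i ≥ 1, D_i has a unique factorization into atoms of P_{fin,0}(ℕ₀), namely the product of the atoms {0, 1+n_j} for j = 0,…,i; in particular L(D_i) = {i+1}. -/
open Pointwise

lemma zero_mem_msum (l : Multiset (Finset ℕ)) (h : ∀ U ∈ l, (0:ℕ) ∈ U) :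
    (0:ℕ) ∈ l.sum := by
  induction l using Multiset.induction with
  | empty => simp [Finset.mem_zero]
  | cons V l ih =>
    rw [Multiset.sum_cons]
    have : (0:ℕ) + 0 ∈ V + l.sum :=
      Finset.add_mem_add (h V (Multiset.mem_cons_self V l))
        (ih (fun U hU => h U (Multiset.mem_cons_of_mem hU)))
    simpa using this

lemma subset_add_left' {A B : Finset ℕ} (h0 : 0 ∈ B) : A ⊆ A + B := by
  intro a ha
  have : a + 0 ∈ A + B := Finset.add_mem_add ha h0
  simpa using this

lemma subset_add_right' {A B : Finset ℕ} (h0 : 0 ∈ A) : B ⊆ A + B := by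
  intro b hb
  have : 0 + b ∈ A + B := Finset.add_mem_add h0 hb
  simpa using this

lemma subset_msum (l : Multiset (Finset ℕ)) (U : Finset ℕ) (hU : U ∈ l)
    (h : ∀ V ∈ l, (0:ℕ) ∈ V) : U ⊆ l.sum := by
  induction l using Multiset.induction with
  | empty => simp at hU
  | cons V l ih =>
    rw [Multiset.sum_cons]
    rcases Multiset.mem_cons.mp hU with h1 | h1
    · subst h1
      exact subset_add_left' (zero_mem_msum l (fun W hW => h W (Multiset.mem_cons_of_mem hW)))
    · exact (ih h1 (fun W hW => h W (Multiset.mem_cons_of_mem hW))).trans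
        (subset_add_right' (h V (Multiset.mem_cons_self V l)))

lemma isAtomP_pair {m : ℕ} (hm : 1 ≤ m) : IsAtomP {0, m} := by
  refine ⟨Finset.mem_insert_self 0 _, ?_, ?_⟩
  · intro h
    have : m ∈ ({0, m} : Finset ℕ) := by simp
    rw [h] at this
    simp at this
    omega
  · intro A B h0A h0B hX
    have hA : A ⊆ ({0, m} : Finset ℕ) := hX ▸ subset_add_left' h0B
    have hB : B ⊆ ({0, m} : Finset ℕ) := hX ▸ subset_add_right' h0A
    by_cases hmA : m ∈ A
    · right
      apply Finset.eq_singleton_iff_unique_mem.mpr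
      refine ⟨h0B, fun b hb => ?_⟩
      have hb' := hB hb
      simp only [Finset.mem_insert, Finset.mem_singleton] at hb'
      rcases hb' with rfl | rfl
      · rfl
      · exfalso
        have : b + b ∈ A + B := Finset.add_mem_add hmA hb
        rw [← hX] at this
        simp only [Finset.mem_insert, Finset.mem_singleton] at this
        omega
    · left
      apply Finset.eq_singleton_iff_unique_mem.mpr
      refine ⟨h0A, fun a ha => ?_⟩
      have ha' := hA ha
      simp only [Finset.mem_insert, Finset.mem_singleton] at ha'
      rcases ha' with rfl | rfl
      · rfl
      · exact absurd ha hmA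

lemma split_lemma_s14 (s M : ℕ) (h2s : 2 * s < M) (E F : Finset ℕ)
    (hE0 : 0 ∈ E) (hEs : ∀ x ∈ E, x ≤ s)
    (hEF : F = E + ({0, M} : Finset ℕ))
    (A B : Finset ℕ) (h0A : 0 ∈ A) (h0B : 0 ∈ B)
    (hAs : ∀ a ∈ A, a ≤ s) (hsum : F = A + B) :
    0 ∈ B.filter (· ≤ s) ∧ 0 ∈ (B.filter (fun b => s < b)).image (· - M) ∧
    E = A + B.filter (· ≤ s) ∧ E = A + (B.filter (fun b => s < b)).image (· - M) ∧
    B = B.filter (· ≤ s) ∪ ((B.filter (fun b => s < b)).image (· - M)).image (· + M) := by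
  have hsM : s < M := by omega
  have hgap : ∀ x ∈ F, (x ∈ E) ∨ (M ≤ x ∧ x - M ∈ E) := by
    intro x hx
    rw [hEF, Finset.mem_add] at hx
    obtain ⟨e, he, t, ht, hxe⟩ := hx
    simp only [Finset.mem_insert, Finset.mem_singleton] at ht
    rcases ht with rfl | ht2
    · left; rw [← hxe, add_zero]; exact he
    · rw [ht2] at hxe
      right
      refine ⟨by omega, ?_⟩
      have : x - M = e := by omega
      rw [this]; exact he
  have hEsubF : E ⊆ F := by
    rw [hEF]; exact subset_add_left' (Finset.mem_insert_self 0 _)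
  have hEMF : ∀ e ∈ E, e + M ∈ F := by
    intro e he
    rw [hEF]
    exact Finset.add_mem_add he (by simp)
  have hBs0 : 0 ∈ B.filter (· ≤ s) := Finset.mem_filter.mpr ⟨h0B, by simp⟩
  have hBF : B ⊆ F := hsum ▸ subset_add_right' h0A
  have hBbig : ∀ b ∈ B, s < b → M ≤ b ∧ b - M ∈ E := by
    intro b hb hbs
    rcases hgap b (hBF hb) with h | h
    · exact absurd (hEs b h) (by omega)
    · exact h
  have hB'0 : 0 ∈ (B.filter (fun b => s < b)).image (· - M) := by
    have hMF : M ∈ F := by simpa using hEMF 0 hE0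
    rw [hsum, Finset.mem_add] at hMF
    obtain ⟨a, ha, b, hb, hab⟩ := hMF
    have has : a ≤ s := hAs a ha
    have hbs : s < b := by omega
    have hbM := hBbig b hb hbs
    have ha0 : a = 0 := by omega
    have hbM' : b = M := by omega
    apply Finset.mem_image.mpr
    exact ⟨b, Finset.mem_filter.mpr ⟨hb, hbs⟩, by omega⟩
  have hsmall : E = A + B.filter (· ≤ s) := by
    apply Finset.Subset.antisymm
    · intro d hd
      have hdF : d ∈ F := hEsubF hd
      rw [hsum, Finset.mem_add] at hdF
      obtain ⟨a, ha, b, hb, hab⟩ := hdF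
      have hds : d ≤ s := hEs d hd
      have hbs : b ≤ s := by omega
      exact Finset.mem_add.mpr ⟨a, ha, b, Finset.mem_filter.mpr ⟨hb, hbs⟩, hab⟩
    · intro x hx
      rw [Finset.mem_add] at hx
      obtain ⟨a, ha, b, hb, hab⟩ := hx
      have hbs := (Finset.mem_filter.mp hb).2
      have hbB := (Finset.mem_filter.mp hb).1
      have hxF : x ∈ F := hsum ▸ (hab ▸ Finset.add_mem_add ha hbB)
      rcases hgap x hxF with h | h
      · exact h
      · exfalso
        have := hAs a ha
        omega
  have hbig : E = A + (B.filter (fun b => s < b)).image (· - M) := by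
    apply Finset.Subset.antisymm
    · intro d hd
      have hdF : d + M ∈ F := hEMF d hd
      rw [hsum, Finset.mem_add] at hdF
      obtain ⟨a, ha, b, hb, hab⟩ := hdF
      have has : a ≤ s := hAs a ha
      have hds : d ≤ s := hEs d hd
      have hbs : s < b := by omega
      have hbM := (hBbig b hb hbs).1
      refine Finset.mem_add.mpr ⟨a, ha, b - M, ?_, by omega⟩
      exact Finset.mem_image.mpr ⟨b, Finset.mem_filter.mpr ⟨hb, hbs⟩, rfl⟩
    · intro x hx
      rw [Finset.mem_add] at hx
      obtain ⟨a, ha, y, hy, hay⟩ := hx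
      obtain ⟨b, hb, hby⟩ := Finset.mem_image.mp hy
      have hbB := (Finset.mem_filter.mp hb).1
      have hbs := (Finset.mem_filter.mp hb).2
      have hbM := (hBbig b hbB hbs).1
      have habF : a + b ∈ F := hsum ▸ Finset.add_mem_add ha hbB
      rcases hgap (a + b) habF with h | h
      · exact absurd (hEs _ h) (by omega)
      · have : x = a + b - M := by omega
        rw [this]; exact h.2
  refine ⟨hBs0, hB'0, hsmall, hbig, ?_⟩
  ext x
  simp only [Finset.mem_union, Finset.mem_image, Finset.mem_filter]
  constructor
  · intro hx
    by_cases hxs : x ≤ s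
    · exact Or.inl ⟨hx, hxs⟩
    · right
      have hbs : s < x := by omega
      have hbM := (hBbig x hx hbs).1
      exact ⟨x - M, ⟨x, ⟨hx, hbs⟩, rfl⟩, by omega⟩
  · rintro (⟨hx, -⟩ | ⟨y, ⟨b, ⟨hbB, hbs⟩, rfl⟩, rfl⟩)
    · exact hx
    · have hbM := (hBbig b hbB hbs).1
      have : b - M + M = b := by omega
      rw [this]; exact hbB


lemma smallSumLe (s M : ℕ) (h2s : 2 * s < M) (F : Finset ℕ)
    (hgap : ∀ x ∈ F, x ≤ s ∨ M ≤ x) :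
    ∀ l : Multiset (Finset ℕ), (∀ U ∈ l, (0:ℕ) ∈ U) →
      (∀ U ∈ l, ∀ u ∈ U, u ≤ s) → l.sum ⊆ F → ∀ x ∈ l.sum, x ≤ s := by
  intro l
  induction l using Multiset.induction with
  | empty =>
    intro _ _ _ x hx
    simp [Finset.mem_zero] at hx
    omega
  | cons V l ih =>
    intro h0 hsm hsub x hx
    rw [Multiset.sum_cons] at hx hsub
    have h0l : ∀ U ∈ l, (0:ℕ) ∈ U := fun U hU => h0 U (Multiset.mem_cons_of_mem hU)
    have hsub' : l.sum ⊆ F :=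
      (subset_add_right' (h0 V (Multiset.mem_cons_self V l))).trans hsub
    rw [Finset.mem_add] at hx
    obtain ⟨v, hv, y, hy, hxy⟩ := hx
    have hys : y ≤ s := ih h0l (fun U hU => hsm U (Multiset.mem_cons_of_mem hU)) hsub' y hy
    have hvs : v ≤ s := hsm V (Multiset.mem_cons_self V l) v hv
    have hxF : x ∈ F := hsub (Finset.mem_add.mpr ⟨v, hv, y, hy, hxy⟩)
    rcases hgap x hxF with h | h
    · exact h
    · omega

lemma base_cancel_aux (B C : Finset ℕ) (h0B : 0 ∈ B) (h0C : 0 ∈ C)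
    (h : ({0, 1} : Finset ℕ) = B + C) :
    C = if 1 ∈ B then {0} else ({0, 1} : Finset ℕ) := by
  have hBsub : B ⊆ ({0,1} : Finset ℕ) := h ▸ subset_add_left' h0C
  have hCsub : C ⊆ ({0,1} : Finset ℕ) := h ▸ subset_add_right' h0B
  by_cases h1B : 1 ∈ B
  · rw [if_pos h1B]
    apply Finset.eq_singleton_iff_unique_mem.mpr
    refine ⟨h0C, fun c hc => ?_⟩
    have := hCsub hc
    simp only [Finset.mem_insert, Finset.mem_singleton] at this
    rcases this with rfl | rfl
    · rfl
    · exfalso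
      have : 1 + 1 ∈ B + C := Finset.add_mem_add h1B hc
      rw [← h] at this
      simp at this
  · rw [if_neg h1B]
    have hB : B = {0} := by
      apply Finset.eq_singleton_iff_unique_mem.mpr
      refine ⟨h0B, fun b hb => ?_⟩
      have := hBsub hb
      simp only [Finset.mem_insert, Finset.mem_singleton] at this
      rcases this with rfl | rfl
      · rfl
      · exact absurd hb h1B
    rw [hB] at h
    have : ({0} : Finset ℕ) = (0 : Finset ℕ) := rfl
    rw [this, zero_add] at h
    exact h.symm

lemma key (n : ℕ → ℕ) (D : ℕ → Finset ℕ)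
    (hn0 : n 0 = 0) (hD0 : D 0 = ({0, 1} : Finset ℕ))
    (hn : ∀ i : ℕ, 3 * (D i).sup id ≤ n (i + 1))
    (hD : ∀ i : ℕ, D (i + 1) = D i + ({0, 1 + n (i + 1)} : Finset ℕ)) :
    ∀ i : ℕ, 0 ∈ D i ∧ RelCancel (D i) ∧
      ∀ l : Multiset (Finset ℕ), (∀ U ∈ l, IsAtomP U) → l.sum = D i →
        l = (Multiset.range (i + 1)).map (fun j => ({0, 1 + n j} : Finset ℕ)) := by
  intro i
  induction i with
  | zero =>
    refine ⟨by rw [hD0]; simp, ?_, ?_⟩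
    · intro B C C' h0B h0C h0C' h1 h2
      rw [hD0] at h1 h2
      rw [base_cancel_aux B C h0B h0C h1, base_cancel_aux B C' h0B h0C' h2]
    · intro l hat hsum
      rw [hD0] at hsum
      have h0l : ∀ U ∈ l, (0:ℕ) ∈ U := fun U hU => (hat U hU).1
      have hlne : l ≠ 0 := by
        intro h
        rw [h] at hsum
        simp only [Multiset.sum_zero] at hsum
        have : (1:ℕ) ∈ (0 : Finset ℕ) := by rw [hsum]; simp
        simp [Finset.mem_zero] at this
      obtain ⟨U, hUl⟩ := Multiset.exists_mem_of_ne_zero hlne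
      have hl : l = U ::ₘ l.erase U := (Multiset.cons_erase hUl).symm
      set l' := l.erase U with hl'def
      have hsum' : U + l'.sum = ({0,1} : Finset ℕ) := by
        rw [hl, Multiset.sum_cons] at hsum; exact hsum
      have h0l' : ∀ V ∈ l', (0:ℕ) ∈ V := fun V hV => h0l V (Multiset.mem_of_mem_erase hV)
      have h0A : (0:ℕ) ∈ l'.sum := zero_mem_msum l' h0l'
      have hUsub : U ⊆ ({0,1} : Finset ℕ) := hsum' ▸ subset_add_left' h0A
      have h1U : 1 ∈ U := by
        by_contra h1U
        have : U = {0} := by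
          apply Finset.eq_singleton_iff_unique_mem.mpr
          refine ⟨h0l U hUl, fun u hu => ?_⟩
          have := hUsub hu
          simp only [Finset.mem_insert, Finset.mem_singleton] at this
          rcases this with rfl | rfl
          · rfl
          · exact absurd hu h1U
        exact (hat U hUl).2.1 this
      have hA : l'.sum = {0} := by
        apply Finset.eq_singleton_iff_unique_mem.mpr
        refine ⟨h0A, fun a ha => ?_⟩
        have haU : a ∈ ({0,1} : Finset ℕ) := (hsum' ▸ subset_add_right' (h0l U hUl)) ha
        simp only [Finset.mem_insert, Finset.mem_singleton] at haU
        rcases haU with rfl | rfl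
        · rfl
        · exfalso
          have : 1 + 1 ∈ U + l'.sum := Finset.add_mem_add h1U ha
          rw [hsum'] at this
          simp at this
      have hl'0 : l' = 0 := by
        apply Multiset.eq_zero_of_forall_notMem
        intro V hV
        have hVsub : V ⊆ l'.sum := subset_msum l' V hV h0l'
        have : V = {0} := by
          apply Finset.eq_singleton_iff_unique_mem.mpr
          refine ⟨h0l' V hV, fun v hv => ?_⟩
          have := hVsub hv
          rw [hA] at this
          simpa using this
        exact (hat V (Multiset.mem_of_mem_erase hV)).2.1 this
      have hU : U = ({0,1} : Finset ℕ) := by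
        rw [hl'0] at hsum'
        simp only [Multiset.sum_zero] at hsum'
        rw [add_zero] at hsum'
        exact hsum'
      rw [hl, hl'0, hU]
      have : Multiset.range 1 = ({0} : Multiset ℕ) := by rfl
      rw [this]
      simp [hn0]
  | succ i ih =>
    obtain ⟨h0D, hRC, hUniq⟩ := ih
    set s := (D i).sup id with hs
    set M := 1 + n (i+1) with hM
    have hEs : ∀ x ∈ D i, x ≤ s := fun x hx => Finset.le_sup (f := id) hx
    have h2s : 2 * s < M := by have := hn i; omega
    have hDi1 : D (i+1) = D i + ({0, M} : Finset ℕ) := hD i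
    have h0D1 : 0 ∈ D (i+1) := by
      rw [hDi1]
      have : (0:ℕ) + 0 ∈ D i + ({0,M}:Finset ℕ) := Finset.add_mem_add h0D (by simp)
      simpa using this
    have hgap2 : ∀ x ∈ D (i+1), x ≤ s ∨ M ≤ x := by
      intro x hx
      rw [hDi1, Finset.mem_add] at hx
      obtain ⟨e, he, t, ht, hxe⟩ := hx
      simp only [Finset.mem_insert, Finset.mem_singleton] at ht
      have hes := hEs e he
      rcases ht with rfl | ht2 <;> omega
    have hFle : ∀ x ∈ D (i+1), x ≤ s + M := by
      intro x hx
      rw [hDi1, Finset.mem_add] at hx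
      obtain ⟨e, he, t, ht, hxe⟩ := hx
      simp only [Finset.mem_insert, Finset.mem_singleton] at ht
      have hes := hEs e he
      rcases ht with rfl | ht2 <;> omega
    refine ⟨h0D1, ?_, ?_⟩
    · intro B C C' h0B h0C h0C' h1 h2
      by_cases hb : ∃ b ∈ B, s < b
      · obtain ⟨b, hbB, hbs⟩ := hb
        have hbD : b ∈ D (i+1) := by rw [h1]; exact subset_add_left' h0C hbB
        have hbM : M ≤ b := by rcases hgap2 b hbD with h | h <;> omega
        have hCsmall : ∀ c ∈ C, c ≤ s := by
          intro c hc
          by_contra hcs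
          push_neg at hcs
          have hcD : c ∈ D (i+1) := by rw [h1]; exact subset_add_right' h0B hc
          have hcM : M ≤ c := by rcases hgap2 c hcD with h | h <;> omega
          have hbc : b + c ∈ D (i+1) := by rw [h1]; exact Finset.add_mem_add hbB hc
          have := hFle _ hbc
          omega
        have hC'small : ∀ c ∈ C', c ≤ s := by
          intro c hc
          by_contra hcs
          push_neg at hcs
          have hcD : c ∈ D (i+1) := by rw [h2]; exact subset_add_right' h0B hc
          have hcM : M ≤ c := by rcases hgap2 c hcD with h | h <;> omega
          have hbc : b + c ∈ D (i+1) := by rw [h2]; exact Finset.add_mem_add hbB hc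
          have := hFle _ hbc
          omega
        have S1 := split_lemma_s14 s M h2s (D i) (D (i+1)) h0D hEs hDi1 C B h0C h0B hCsmall
          (by rw [h1, add_comm])
        have S2 := split_lemma_s14 s M h2s (D i) (D (i+1)) h0D hEs hDi1 C' B h0C' h0B hC'small
          (by rw [h2, add_comm])
        exact hRC _ C C' S1.1 h0C h0C' ((S1.2.2.1).trans (add_comm C _))
          ((S2.2.2.1).trans (add_comm C' _))
      · push_neg at hb
        have hBsmall : ∀ x ∈ B, x ≤ s := fun x hx => by have := hb x hx; omega
        have S1 := split_lemma_s14 s M h2s (D i) (D (i+1)) h0D hEs hDi1 B C h0B h0C hBsmall h1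
        have S2 := split_lemma_s14 s M h2s (D i) (D (i+1)) h0D hEs hDi1 B C' h0B h0C' hBsmall h2
        obtain ⟨hCs0, hC10, hDs, hDb, hCrec⟩ := S1
        obtain ⟨hCs0', hC10', hDs', hDb', hCrec'⟩ := S2
        have e1 := hRC B _ _ h0B hCs0 hCs0' hDs hDs'
        have e2 := hRC B _ _ h0B hC10 hC10' hDb hDb'
        rw [hCrec, hCrec', e1, e2]
    · intro l hat hsum
      have h0l : ∀ U ∈ l, (0:ℕ) ∈ U := fun U hU => (hat U hU).1
      have hbigex : ∃ U ∈ l, ∃ u ∈ U, s < u := by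
        by_contra hcon
        push_neg at hcon
        have hsm : ∀ U ∈ l, ∀ u ∈ U, u ≤ s := fun U hU u hu => by have := hcon U hU u hu; omega
        have hall := smallSumLe s M h2s (D (i+1)) hgap2 l h0l hsm
          (by rw [hsum])
        have hMD : M ∈ D (i+1) := by
          rw [hDi1]
          have : (0:ℕ) + M ∈ D i + ({0,M}:Finset ℕ) := Finset.add_mem_add h0D (by simp)
          simpa using this
        have := hall M (by rw [hsum]; exact hMD)
        omega
      obtain ⟨U, hUl, u, huU, hus⟩ := hbigex
      have hl : l = U ::ₘ l.erase U := (Multiset.cons_erase hUl).symm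
      set l' := l.erase U with hl'def
      have hmem' : ∀ V ∈ l', V ∈ l := fun V hV => Multiset.mem_of_mem_erase hV
      have h0l' : ∀ V ∈ l', (0:ℕ) ∈ V := fun V hV => h0l V (hmem' V hV)
      have h0A : (0:ℕ) ∈ l'.sum := zero_mem_msum l' h0l'
      have hsumUA : D (i+1) = U + l'.sum := by rw [← hsum, hl, Multiset.sum_cons]
      have hUD : U ⊆ D (i+1) := by
        rw [hsumUA]; exact subset_add_left' h0A
      have huM : M ≤ u := by rcases hgap2 u (hUD huU) with h | h <;> omega
      have hAsmall : ∀ a ∈ l'.sum, a ≤ s := by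
        intro a ha
        by_contra hcs
        push_neg at hcs
        have haD : a ∈ D (i+1) := by rw [hsumUA]; exact subset_add_right' (h0l U hUl) ha
        have haM : M ≤ a := by rcases hgap2 a haD with h | h <;> omega
        have hua : u + a ∈ D (i+1) := by rw [hsumUA]; exact Finset.add_mem_add huU ha
        have := hFle _ hua
        omega
      have S := split_lemma_s14 s M h2s (D i) (D (i+1)) h0D hEs hDi1 l'.sum U h0A (h0l U hUl)
        hAsmall (by rw [hsumUA, add_comm])
      obtain ⟨hUs0, hU10, hDs, hDb, hUrec⟩ := S
      have hUsU1 : U.filter (· ≤ s) = (U.filter (fun b => s < b)).image (· - M) :=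
        hRC l'.sum _ _ h0A hUs0 hU10 hDs hDb
      have hunion : ∀ W : Finset ℕ, W ∪ W.image (· + M) = W + ({0, M} : Finset ℕ) := by
        intro W
        ext x
        simp only [Finset.mem_union, Finset.mem_image, Finset.mem_add, Finset.mem_insert,
          Finset.mem_singleton]
        constructor
        · rintro (hx | ⟨y, hy, rfl⟩)
          · exact ⟨x, hx, 0, Or.inl rfl, add_zero x⟩
          · exact ⟨y, hy, M, Or.inr rfl, rfl⟩
        · rintro ⟨p, hp, t, (rfl | rfl), rfl⟩
          · left; rwa [add_zero]
          · right; exact ⟨p, hp, rfl⟩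
      have hUrec' := hUrec
      rw [← hUsU1] at hUrec'
      have hUeq : U = U.filter (· ≤ s) + ({0, M} : Finset ℕ) :=
        hUrec'.trans (hunion _)
      have hatom := (hat U hUl).2.2 _ _ hUs0 (Finset.mem_insert_self 0 _) hUeq
      have hUs : U.filter (· ≤ s) = {0} := by
        rcases hatom with h | h
        · exact h
        · exfalso
          have hMmem : M ∈ ({0,M} : Finset ℕ) := by simp
          rw [h] at hMmem
          simp only [Finset.mem_singleton] at hMmem
          omega
      have hADi : l'.sum = D i := by
        rw [hUs] at hDs
        have h00 : ({0} : Finset ℕ) = (0 : Finset ℕ) := rfl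
        rw [h00, add_zero] at hDs
        exact hDs.symm
      have hU : U = ({0, M} : Finset ℕ) := by
        rw [hUeq, hUs]
        have h00 : ({0} : Finset ℕ) = (0 : Finset ℕ) := rfl
        rw [h00, zero_add]
      have hl'uniq := hUniq l' (fun V hV => hat V (hmem' V hV)) hADi
      rw [hl, hU, hl'uniq]
      conv_rhs => rw [Multiset.range_succ, Multiset.map_cons]




lemma canon_sum (n : ℕ → ℕ) (D : ℕ → Finset ℕ)
    (hn0 : n 0 = 0) (hD0 : D 0 = ({0,1} : Finset ℕ))
    (hD : ∀ i : ℕ, D (i+1) = D i + ({0, 1 + n (i+1)} : Finset ℕ)) :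
    ∀ i : ℕ, ((Multiset.range (i+1)).map (fun j => ({0, 1 + n j} : Finset ℕ))).sum = D i := by
  intro i
  induction i with
  | zero =>
    have h : Multiset.range 1 = ({0} : Multiset ℕ) := rfl
    rw [h]
    simp [hn0, hD0]
  | succ i ih =>
    rw [Multiset.range_succ, Multiset.map_cons, Multiset.sum_cons, ih, hD i, add_comm]

theorem unique_factorization_D (n : ℕ → ℕ) (D : ℕ → Finset ℕ)
    (hn0 : n 0 = 0) (hD0 : D 0 = ({0, 1} : Finset ℕ))
    (hn : ∀ i : ℕ, 3 * (D i).sup id ≤ n (i + 1))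
    (hD : ∀ i : ℕ, D (i + 1) = D i + ({0, 1 + n (i + 1)} : Finset ℕ)) :
    ∀ i : ℕ, 1 ≤ i →
      (∀ l : Multiset (Finset ℕ), (∀ U ∈ l, IsAtomP U) → l.sum = D i →
        l = (Multiset.range (i + 1)).map (fun j => ({0, 1 + n j} : Finset ℕ))) ∧
      LengthSet (D i) = {i + 1} := by
  intro i _hi
  obtain ⟨h0D, hRC, hUniq⟩ := key n D hn0 hD0 hn hD i
  refine ⟨hUniq, ?_⟩
  ext m
  simp only [LengthSet, Set.mem_setOf_eq, Set.mem_singleton_iff]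
  constructor
  · rintro ⟨l, hcard, hat, hsum⟩
    rw [hUniq l hat hsum] at hcard
    simpa using hcard.symm
  · rintro rfl
    refine ⟨(Multiset.range (i+1)).map (fun j => ({0, 1 + n j} : Finset ℕ)), by simp, ?_,
      canon_sum n D hn0 hD0 hD i⟩
    intro U hU
    simp only [Multiset.mem_map] at hU
    obtain ⟨j, hj, rfl⟩ := hU
    exact isAtomP_pair (by omega)
end

section
/- Let X ∈ P_{fin,0}(ℕ₀) and n ∈ ℕ with n > 2·max(X). Then L(X + {0,n}) = 1 + ⋃_{A ∈ N} L(A), where N is the set of A ∈ P_{fin,0}(ℕ₀) such that there exist relatively prime C, D ∈ P_{fin,0}(ℕ₀) with A + C = A + D = X. -/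
open Pointwise

namespace LSAux

lemma mem_shift {n x : ℕ} {T : Finset ℕ} : x ∈ ({n} : Finset ℕ) + T ↔ ∃ t ∈ T, n + t = x := by
  simp [Finset.mem_add]

lemma zero_mem_sum (l : Multiset (Finset ℕ)) (h : ∀ U ∈ l, (0:ℕ) ∈ U) : (0:ℕ) ∈ l.sum := by
  induction l using Multiset.induction_on with
  | empty => simp [Finset.mem_zero]
  | cons U t ih =>
    rw [Multiset.sum_cons]
    simpa using Finset.add_mem_add (h U (Multiset.mem_cons_self U t))
      (ih fun V hV => h V (Multiset.mem_cons_of_mem hV))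

lemma sep {n : ℕ} {S S' T T' : Finset ℕ} (hS : ∀ s ∈ S, s < n) (hS' : ∀ s ∈ S', s < n)
    (h : S ∪ (({n} : Finset ℕ) + T) = S' ∪ (({n} : Finset ℕ) + T')) : S = S' ∧ T = T' := by
  constructor
  · ext x
    constructor
    · intro hx
      have hx2 : x ∈ S ∪ (({n} : Finset ℕ) + T) := Finset.mem_union_left _ hx
      rw [h] at hx2
      rcases Finset.mem_union.mp hx2 with h2 | h2
      · exact h2
      · obtain ⟨t, _, rfl⟩ := mem_shift.mp h2
        exact absurd (hS _ hx) (by omega)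
    · intro hx
      have hx2 : x ∈ S' ∪ (({n} : Finset ℕ) + T') := Finset.mem_union_left _ hx
      rw [← h] at hx2
      rcases Finset.mem_union.mp hx2 with h2 | h2
      · exact h2
      · obtain ⟨t, _, rfl⟩ := mem_shift.mp h2
        exact absurd (hS' _ hx) (by omega)
  · ext x
    constructor
    · intro hx
      have hx2 : n + x ∈ S ∪ (({n} : Finset ℕ) + T) :=
        Finset.mem_union_right _ (mem_shift.mpr ⟨x, hx, rfl⟩)
      rw [h] at hx2
      rcases Finset.mem_union.mp hx2 with h2 | h2
      · exact absurd (hS' _ h2) (by omega)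
      · obtain ⟨t, ht, hte⟩ := mem_shift.mp h2
        have : t = x := by omega
        exact this ▸ ht
    · intro hx
      have hx2 : n + x ∈ S' ∪ (({n} : Finset ℕ) + T') :=
        Finset.mem_union_right _ (mem_shift.mpr ⟨x, hx, rfl⟩)
      rw [← h] at hx2
      rcases Finset.mem_union.mp hx2 with h2 | h2
      · exact absurd (hS _ h2) (by omega)
      · obtain ⟨t, ht, hte⟩ := mem_shift.mp h2
        have : t = x := by omega
        exact this ▸ ht

lemma split (n : ℕ) (B : Finset ℕ) :
    B = B.filter (· < n) ∪ (({n} : Finset ℕ) + (B.filter (n ≤ ·)).image (· - n)) := by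
  ext b
  simp only [Finset.mem_union, Finset.mem_filter, mem_shift, Finset.mem_image]
  constructor
  · intro hb
    rcases lt_or_ge b n with h | h
    · exact Or.inl ⟨hb, h⟩
    · exact Or.inr ⟨b - n, ⟨b, ⟨hb, h⟩, rfl⟩, by omega⟩
  · rintro (⟨hb, _⟩ | ⟨t, ⟨c, ⟨hc, hcn⟩, hct⟩, hnt⟩)
    · exact hb
    · have : b = c := by omega
      exact this ▸ hc

lemma add_split (A C D : Finset ℕ) (n : ℕ) :
    A + (C ∪ (({n} : Finset ℕ) + D)) = (A + C) ∪ (({n} : Finset ℕ) + (A + D)) := by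
  rw [Finset.add_union, add_left_comm]

lemma sum_small {M n : ℕ} {Y : Finset ℕ} (hn : 2*M < n) (hY : ∀ y ∈ Y, y ≤ M ∨ n ≤ y) :
    ∀ l : Multiset (Finset ℕ), (∀ U ∈ l, (0:ℕ) ∈ U) → (∀ U ∈ l, ∀ u ∈ U, u ≤ M) →
      l.sum ⊆ Y → ∀ y ∈ l.sum, y ≤ M := by
  intro l
  induction l using Multiset.induction_on with
  | empty =>
    intro _ _ _ y hy
    rw [Multiset.sum_zero] at hy
    have : y = 0 := Finset.mem_zero.mp hy
    omega
  | cons U t ih =>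
    intro h0 hsmall hsub y hy
    rw [Multiset.sum_cons] at hsub hy
    have hsub' : t.sum ⊆ Y :=
      (Finset.subset_add_right t.sum (h0 U (Multiset.mem_cons_self U t))).trans hsub
    obtain ⟨u, hu, s, hs, rfl⟩ := Finset.mem_add.mp hy
    have hu' : u ≤ M := hsmall U (Multiset.mem_cons_self U t) u hu
    have hs' : s ≤ M := ih (fun V hV => h0 V (Multiset.mem_cons_of_mem hV))
      (fun V hV => hsmall V (Multiset.mem_cons_of_mem hV)) hsub' s hs
    have : u + s ∈ Y := hsub hy
    rcases hY _ this with h | h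
    · exact h
    · omega

lemma zero_of_add_zero {A D : Finset ℕ} (h : (0:ℕ) ∈ A + D) : (0:ℕ) ∈ A ∧ (0:ℕ) ∈ D := by
  obtain ⟨a, ha, d, hd, had⟩ := Finset.mem_add.mp h
  have : a = 0 ∧ d = 0 := by omega
  exact ⟨this.1 ▸ ha, this.2 ▸ hd⟩

lemma divides_pair {M n : ℕ} (hn : 2*M < n) {C D T V : Finset ℕ} (hT0 : 0 ∈ T) (hV0 : 0 ∈ V)
    (hTM : ∀ t ∈ T, t ≤ M) (hCM : ∀ c ∈ C, c ≤ M) (hD0 : 0 ∈ D)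
    (hTV : T + V = C ∪ (({n} : Finset ℕ) + D)) :
    (∃ C', 0 ∈ C' ∧ C = T + C') ∧ (∃ D', 0 ∈ D' ∧ D = T + D') := by
  have hMn : M < n := by omega
  set C' := V.filter (· < n) with hC'
  set D' := (V.filter (n ≤ ·)).image (· - n) with hD'
  have hVsplit : V = C' ∪ (({n} : Finset ℕ) + D') := split n V
  have hkey : (T + C') ∪ (({n} : Finset ℕ) + (T + D')) = C ∪ (({n} : Finset ℕ) + D) := by
    rw [← add_split, ← hVsplit, hTV]
  have hVsub : V ⊆ C ∪ (({n} : Finset ℕ) + D) := by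
    rw [← hTV]; exact Finset.subset_add_right V hT0
  have hTC : ∀ s ∈ T + C', s < n := by
    intro s hs
    obtain ⟨t, ht, c, hc, rfl⟩ := Finset.mem_add.mp hs
    have hcV : c ∈ V := Finset.mem_of_mem_filter c hc
    have hcn : c < n := (Finset.mem_filter.mp hc).2
    have hc1 : c ≤ M := by
      rcases Finset.mem_union.mp (hVsub hcV) with h | h
      · exact hCM c h
      · obtain ⟨d, _, hd⟩ := mem_shift.mp h; omega
    have := hTM t ht; omega
  have hCn : ∀ c ∈ C, c < n := fun c hc => lt_of_le_of_lt (hCM c hc) hMn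
  obtain ⟨h1, h2⟩ := sep hTC hCn hkey
  refine ⟨⟨C', ?_, h1.symm⟩, ⟨D', ?_, h2.symm⟩⟩
  · exact Finset.mem_filter.mpr ⟨hV0, by omega⟩
  · have : (0:ℕ) ∈ T + D' := by rw [h2]; exact hD0
    exact (zero_of_add_zero this).2

lemma atom_of_relPrime {M n : ℕ} (hn : 2*M < n) {C D : Finset ℕ} (hC0 : 0 ∈ C) (hD0 : 0 ∈ D)
    (hCM : ∀ c ∈ C, c ≤ M) (hDM : ∀ d ∈ D, d ≤ M) (hrp : RelPrime C D) :
    IsAtomP (C ∪ (({n} : Finset ℕ) + D)) := by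
  set B := C ∪ (({n} : Finset ℕ) + D) with hB
  have hBmem : ∀ b ∈ B, b ≤ M ∨ (n ≤ b ∧ b ≤ n + M) := by
    intro b hb
    rcases Finset.mem_union.mp hb with h | h
    · exact Or.inl (hCM b h)
    · obtain ⟨d, hd, hde⟩ := mem_shift.mp h
      have := hDM d hd
      exact Or.inr ⟨by omega, by omega⟩
  have hnB : n ∈ B := Finset.mem_union_right _ (mem_shift.mpr ⟨0, hD0, rfl⟩)
  refine ⟨Finset.mem_union_left _ hC0, ?_, ?_⟩
  · intro hcon
    rw [hcon] at hnB
    have : n = 0 := Finset.mem_singleton.mp hnB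
    omega
  · intro T V hT0 hV0 hTV
    have hTsub : T ⊆ B := by rw [hTV]; exact Finset.subset_add_left T hV0
    have hVsub : V ⊆ B := by rw [hTV]; exact Finset.subset_add_right V hT0
    by_cases hbig : ∃ t ∈ T, n ≤ t
    · obtain ⟨t0, ht0, ht0n⟩ := hbig
      have hVM : ∀ v ∈ V, v ≤ M := by
        intro v hv
        rcases hBmem v (hVsub hv) with h | h
        · exact h
        · exfalso
          have hm : t0 + v ∈ B := by rw [hTV]; exact Finset.add_mem_add ht0 hv
          rcases hBmem _ hm with h2 | h2 <;> omega
      have hd := divides_pair hn hV0 hT0 hVM hCM hD0 (by rw [add_comm]; exact hTV.symm)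
      exact Or.inr (hrp V hV0 hd.1 hd.2)
    · push_neg at hbig
      have hTM : ∀ t ∈ T, t ≤ M := by
        intro t ht
        rcases hBmem t (hTsub ht) with h | h
        · exact h
        · exact absurd h.1 (not_le.mpr (hbig t ht))
      have hd := divides_pair hn hT0 hV0 hTM hCM hD0 hTV.symm
      exact Or.inl (hrp T hT0 hd.1 hd.2)

end LSAux

theorem lengthSet_add_pair (X : Finset ℕ) (hX : 0 ∈ X) (nn : ℕ) (hn : 2 * X.sup id < nn) :
    LengthSet (X + ({0, nn} : Finset ℕ)) =
      {m | ∃ A C D : Finset ℕ, 0 ∈ A ∧ 0 ∈ C ∧ 0 ∈ D ∧ RelPrime C D ∧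
        A + C = X ∧ A + D = X ∧ ∃ k ∈ LengthSet A, m = 1 + k} := by
  set M := X.sup id with hM
  have hXM : ∀ x ∈ X, x ≤ M := fun x hx => Finset.le_sup (f := id) hx
  have hMn : M < nn := by omega
  have hY : X + ({0, nn} : Finset ℕ) = X ∪ (({nn} : Finset ℕ) + X) := by
    rw [Finset.insert_eq, Finset.add_union]
    congr 1
    · show X + (0 : Finset ℕ) = X
      exact add_zero X
    · exact add_comm X {nn}
  have hYmem : ∀ y ∈ X ∪ (({nn} : Finset ℕ) + X), y ≤ M ∨ (nn ≤ y ∧ y ≤ nn + M) := by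
    intro y hy
    rcases Finset.mem_union.mp hy with h | h
    · exact Or.inl (hXM y h)
    · obtain ⟨x, hx, hxe⟩ := LSAux.mem_shift.mp h
      have := hXM x hx
      exact Or.inr ⟨by omega, by omega⟩
  have hYmem' : ∀ y ∈ X ∪ (({nn} : Finset ℕ) + X), y ≤ M ∨ nn ≤ y :=
    fun y hy => (hYmem y hy).imp id And.left
  have hXn : ∀ x ∈ X, x < nn := fun x hx => lt_of_le_of_lt (hXM x hx) hMn
  ext m
  simp only [LengthSet, Set.mem_setOf_eq]
  constructor
  · rintro ⟨l, hcard, hatom, hsum⟩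
    rw [hY] at hsum
    have h0l : ∀ U ∈ l, (0:ℕ) ∈ U := fun U hU => (hatom U hU).1
    have hnnY : nn ∈ X ∪ (({nn} : Finset ℕ) + X) :=
      Finset.mem_union_right _ (LSAux.mem_shift.mpr ⟨0, hX, rfl⟩)
    have hbig : ∃ B ∈ l, ∃ b ∈ B, ¬ b ≤ M := by
      by_contra hcon
      push_neg at hcon
      have := LSAux.sum_small hn hYmem' l h0l hcon (by rw [hsum]) nn (by rw [hsum]; exact hnnY)
      omega
    obtain ⟨B, hBl, b, hbB, hbM⟩ := hbig
    set A := (l.erase B).sum with hA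
    have h0A : (0:ℕ) ∈ A :=
      LSAux.zero_mem_sum _ (fun U hU => h0l U (Multiset.mem_of_mem_erase hU))
    have hsum' : A + B = X ∪ (({nn} : Finset ℕ) + X) := by
      rw [hA, add_comm, ← Multiset.sum_cons, Multiset.cons_erase hBl, hsum]
    have hBY : B ⊆ X ∪ (({nn} : Finset ℕ) + X) := by
      rw [← hsum']; exact Finset.subset_add_right B h0A
    have hbn : nn ≤ b := by
      rcases hYmem' b (hBY hbB) with h | h
      · omega
      · exact h
    have hAM : ∀ a ∈ A, a ≤ M := by
      intro a ha
      have hab : a + b ∈ X ∪ (({nn} : Finset ℕ) + X) := by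
        rw [← hsum']; exact Finset.add_mem_add ha hbB
      rcases hYmem _ hab with h | h <;> omega
    set C := B.filter (· < nn) with hC
    set D := (B.filter (nn ≤ ·)).image (· - nn) with hD
    have hBsplit : B = C ∪ (({nn} : Finset ℕ) + D) := LSAux.split nn B
    have hkey : (A + C) ∪ (({nn} : Finset ℕ) + (A + D)) = X ∪ (({nn} : Finset ℕ) + X) := by
      rw [← LSAux.add_split, ← hBsplit, hsum']
    have hACn : ∀ s ∈ A + C, s < nn := by
      intro s hs
      obtain ⟨a, ha, c, hc, rfl⟩ := Finset.mem_add.mp hs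
      have hcB : c ∈ B := Finset.mem_of_mem_filter c hc
      have hcn : c < nn := (Finset.mem_filter.mp hc).2
      have hc1 : c ≤ M := by
        rcases hYmem' c (hBY hcB) with h | h
        · exact h
        · omega
      have := hAM a ha
      omega
    obtain ⟨hAC, hAD⟩ := LSAux.sep hACn hXn hkey
    have h0D : (0:ℕ) ∈ D := by
      have : (0:ℕ) ∈ A + D := by rw [hAD]; exact hX
      exact (LSAux.zero_of_add_zero this).2
    have h0C : (0:ℕ) ∈ C := Finset.mem_filter.mpr ⟨(hatom B hBl).1, by omega⟩
    refine ⟨A, C, D, h0A, h0C, h0D, ?_, hAC, hAD,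
      Multiset.card (l.erase B),
      ⟨l.erase B, rfl, fun U hU => hatom U (Multiset.mem_of_mem_erase hU), rfl⟩, ?_⟩
    · rintro T hT0 ⟨C', hC'0, hC'⟩ ⟨D', hD'0, hD'⟩
      have hBdec : B = T + (C' ∪ (({nn} : Finset ℕ) + D')) := by
        rw [LSAux.add_split, ← hC', ← hD', ← hBsplit]
      rcases (hatom B hBl).2.2 T _ hT0 (Finset.mem_union_left _ hC'0) hBdec with h | h
      · exact h
      · exfalso
        have hnn : nn ∈ C' ∪ (({nn} : Finset ℕ) + D') :=
          Finset.mem_union_right _ (LSAux.mem_shift.mpr ⟨0, hD'0, rfl⟩)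
        rw [h] at hnn
        have : nn = 0 := Finset.mem_singleton.mp hnn
        omega
    · have hc : Multiset.card (B ::ₘ l.erase B) = Multiset.card (l.erase B) + 1 :=
        Multiset.card_cons _ _
      rw [Multiset.cons_erase hBl] at hc
      omega
  · rintro ⟨A, C, D, h0A, h0C, h0D, hrp, hAC, hAD, k, hk, rfl⟩
    obtain ⟨l, hcard, hatom, hsuml⟩ := hk
    have hCM : ∀ c ∈ C, c ≤ M := fun c hc =>
      hXM c (hAC ▸ (Finset.subset_add_right C h0A) hc)
    have hDM : ∀ d ∈ D, d ≤ M := fun d hd =>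
      hXM d (hAD ▸ (Finset.subset_add_right D h0A) hd)
    have hBatom : IsAtomP (C ∪ (({nn} : Finset ℕ) + D)) :=
      LSAux.atom_of_relPrime hn h0C h0D hCM hDM hrp
    refine ⟨(C ∪ (({nn} : Finset ℕ) + D)) ::ₘ l, ?_, ?_, ?_⟩
    · rw [Multiset.card_cons, hcard]; omega
    · intro U hU
      rcases Multiset.mem_cons.mp hU with rfl | h
      · exact hBatom
      · exact hatom U h
    · rw [Multiset.sum_cons, hsuml, add_comm, LSAux.add_split, hAC, hAD, hY]
end

section
/- Let X ∈ P_{fin,0}(ℕ₀), n > 2·max(X), and let A, C, D ∈ P_{fin,0}(ℕ₀) satisfy A + C = A + D = X. Then C and D are relatively prime if and only if C ∪ (n + D) is an atom of P_{fin,0}(ℕ₀). -/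
open Pointwise

/-- Key structural lemma: if `C ∪ (nn + D) = P + Q` where all elements of `C`, `D`, `Q`
are at most `s` and `2*s < nn`, then `Q` divides both `C` and `D`. -/
lemma aux_main (s nn : ℕ) (hn : 2 * s < nn) (C D P Q : Finset ℕ)
    (hD : (0:ℕ) ∈ D) (hP : (0:ℕ) ∈ P) (hQ : (0:ℕ) ∈ Q)
    (hCs : ∀ c ∈ C, c ≤ s) (hDs : ∀ d ∈ D, d ≤ s) (hQs : ∀ q ∈ Q, q ≤ s)
    (hE : C ∪ (({nn} : Finset ℕ) + D) = P + Q) :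
    (∃ C', 0 ∈ C' ∧ C = Q + C') ∧ (∃ D', 0 ∈ D' ∧ D = Q + D') := by
  -- every element of P is in the union
  have hPE : ∀ p ∈ P, p ∈ C ∪ (({nn} : Finset ℕ) + D) := by
    intro p hp
    rw [hE, Finset.mem_add]
    exact ⟨p, hp, 0, hQ, rfl⟩
  have hmemU : ∀ x : ℕ, x ∈ C ∪ (({nn} : Finset ℕ) + D) ↔
      x ∈ C ∨ ∃ d ∈ D, nn + d = x := by
    intro x
    rw [Finset.mem_union, Finset.mem_add]
    constructor
    · rintro (h | ⟨y, hy, d, hd, rfl⟩)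
      · exact Or.inl h
      · exact Or.inr ⟨d, hd, by simpa using Finset.mem_singleton.mp hy ▸ rfl⟩
    · rintro (h | ⟨d, hd, rfl⟩)
      · exact Or.inl h
      · exact Or.inr ⟨nn, Finset.mem_singleton_self nn, d, hd, rfl⟩
  -- large elements of P are of the form nn + d
  have hPlarge : ∀ p ∈ P, s < p → ∃ d ∈ D, nn + d = p := by
    intro p hp hps
    rcases (hmemU p).mp (hPE p hp) with h | h
    · exact absurd (hCs p h) (by omega)
    · exact h
  constructor
  · -- C = Q + P.filter (· ≤ s)
    refine ⟨P.filter (· ≤ s), Finset.mem_filter.mpr ⟨hP, by simp⟩, ?_⟩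
    ext x
    rw [Finset.mem_add]
    constructor
    · intro hx
      have hxE : x ∈ P + Q := by rw [← hE]; exact Finset.mem_union_left _ hx
      rw [Finset.mem_add] at hxE
      obtain ⟨p, hp, q, hq, rfl⟩ := hxE
      have hxs := hCs _ hx
      exact ⟨q, hq, p, Finset.mem_filter.mpr ⟨hp, by omega⟩, by omega⟩
    · rintro ⟨q, hq, p, hp, rfl⟩
      rw [Finset.mem_filter] at hp
      have hsum : q + p ∈ C ∪ (({nn} : Finset ℕ) + D) := by
        rw [hE, Finset.mem_add]
        exact ⟨p, hp.1, q, hq, by omega⟩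
      rcases (hmemU _).mp hsum with h | ⟨d, hd, hde⟩
      · exact h
      · have := hQs q hq
        have : p ≤ s := by simpa using hp.2
        omega
  · -- D = Q + D.filter (fun d => nn + d ∈ P)
    have hnnP : nn ∈ P := by
      have : nn ∈ P + Q := by
        rw [← hE]
        exact (hmemU nn).mpr (Or.inr ⟨0, hD, by omega⟩)
      rw [Finset.mem_add] at this
      obtain ⟨p, hp, q, hq, hpq⟩ := this
      have hqs := hQs q hq
      have hps : s < p := by omega
      obtain ⟨d, hd, hdp⟩ := hPlarge p hp hps
      have : d = 0 ∧ q = 0 := by omega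
      have : p = nn := by omega
      exact this ▸ hp
    refine ⟨D.filter (fun d => nn + d ∈ P), Finset.mem_filter.mpr ⟨hD, by simpa⟩, ?_⟩
    ext x
    rw [Finset.mem_add]
    constructor
    · intro hx
      have hxE : nn + x ∈ P + Q := by
        rw [← hE]
        exact (hmemU _).mpr (Or.inr ⟨x, hx, rfl⟩)
      rw [Finset.mem_add] at hxE
      obtain ⟨p, hp, q, hq, hpq⟩ := hxE
      have hqs := hQs q hq
      have hps : s < p := by omega
      obtain ⟨d, hd, hdp⟩ := hPlarge p hp hps
      refine ⟨q, hq, d, Finset.mem_filter.mpr ⟨hd, by rw [hdp]; exact hp⟩, by omega⟩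
    · rintro ⟨q, hq, d, hd, rfl⟩
      rw [Finset.mem_filter] at hd
      have hsum : (nn + d) + q ∈ C ∪ (({nn} : Finset ℕ) + D) := by
        rw [hE, Finset.mem_add]
        exact ⟨nn + d, hd.2, q, hq, rfl⟩
      rcases (hmemU _).mp hsum with h | ⟨d', hd', hde⟩
      · have := hCs _ h; omega
      · have : d' = q + d := by omega
        exact this ▸ hd'

theorem relPrime_iff_atom (X : Finset ℕ) (hX : 0 ∈ X) (nn : ℕ) (hn : 2 * X.sup id < nn)
    (A C D : Finset ℕ) (hA : 0 ∈ A) (hC : 0 ∈ C) (hD : 0 ∈ D)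
    (hAC : A + C = X) (hAD : A + D = X) :
    RelPrime C D ↔ IsAtomP (C ∪ (({nn} : Finset ℕ) + D)) := by
  set s := X.sup id with hs
  have hCs : ∀ c ∈ C, c ≤ s := by
    intro c hc
    have : c ∈ X := by
      rw [← hAC, Finset.mem_add]; exact ⟨0, hA, c, hc, by omega⟩
    exact Finset.le_sup (f := id) this
  have hDs : ∀ d ∈ D, d ≤ s := by
    intro d hd
    have : d ∈ X := by
      rw [← hAD, Finset.mem_add]; exact ⟨0, hA, d, hd, by omega⟩
    exact Finset.le_sup (f := id) this
  have hnn0 : 0 < nn := by omega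
  have hnnmem : nn ∈ C ∪ (({nn} : Finset ℕ) + D) := by
    refine Finset.mem_union_right _ ?_
    rw [Finset.mem_add]
    exact ⟨nn, Finset.mem_singleton_self nn, 0, hD, rfl⟩
  constructor
  · -- RelPrime → atom
    intro hrp
    refine ⟨Finset.mem_union_left _ hC, ?_, ?_⟩
    · intro h
      rw [h, Finset.mem_singleton] at hnnmem
      omega
    · intro P Q hP hQ hE
      -- one of P, Q has all elements ≤ s
      have hsmall : (∀ p ∈ P, p ≤ s) ∨ (∀ q ∈ Q, q ≤ s) := by
        by_contra hcon
        push_neg at hcon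
        obtain ⟨⟨p, hp, hps⟩, ⟨q, hq, hqs⟩⟩ := hcon
        have hpE : p ∈ C ∪ (({nn} : Finset ℕ) + D) := by
          rw [hE, Finset.mem_add]; exact ⟨p, hp, 0, hQ, rfl⟩
        have hqE : q ∈ C ∪ (({nn} : Finset ℕ) + D) := by
          rw [hE, Finset.mem_add]; exact ⟨0, hP, q, hq, by omega⟩
        have hplb : nn ≤ p := by
          rcases Finset.mem_union.mp hpE with h | h
          · exact absurd (hCs p h) (by omega)
          · rw [Finset.mem_add] at h
            obtain ⟨y, hy, d, hd, hyd⟩ := h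
            rw [Finset.mem_singleton] at hy
            omega
        have hqlb : nn ≤ q := by
          rcases Finset.mem_union.mp hqE with h | h
          · exact absurd (hCs q h) (by omega)
          · rw [Finset.mem_add] at h
            obtain ⟨y, hy, d, hd, hyd⟩ := h
            rw [Finset.mem_singleton] at hy
            omega
        have hpqE : p + q ∈ C ∪ (({nn} : Finset ℕ) + D) := by
          rw [hE, Finset.mem_add]; exact ⟨p, hp, q, hq, rfl⟩
        rcases Finset.mem_union.mp hpqE with h | h
        · have := hCs _ h; omega
        · rw [Finset.mem_add] at h
          obtain ⟨y, hy, d, hd, hyd⟩ := h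
          rw [Finset.mem_singleton] at hy
          have := hDs d hd
          omega
      rcases hsmall with hPs | hQs
      · left
        have hE' : C ∪ (({nn} : Finset ℕ) + D) = Q + P := by rw [hE, add_comm]
        obtain ⟨hCdvd, hDdvd⟩ := aux_main s nn hn C D Q P hD hQ hP hCs hDs hPs hE'
        exact hrp P hP hCdvd hDdvd
      · right
        obtain ⟨hCdvd, hDdvd⟩ := aux_main s nn hn C D P Q hD hP hQ hCs hDs hQs hE
        exact hrp Q hQ hCdvd hDdvd
  · -- atom → RelPrime
    rintro ⟨_, _, hatom⟩ T hT ⟨C', hC', hCeq⟩ ⟨D', hD', hDeq⟩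
    have hfact : C ∪ (({nn} : Finset ℕ) + D) = T + (C' ∪ (({nn} : Finset ℕ) + D')) := by
      rw [Finset.add_union, hCeq, hDeq]
      congr 1
      rw [← add_assoc, ← add_assoc, add_comm T ({nn} : Finset ℕ)]
    rcases hatom T (C' ∪ (({nn} : Finset ℕ) + D')) hT
        (Finset.mem_union_left _ hC') hfact with h | h
    · exact h
    · exfalso
      have : nn ∈ C' ∪ (({nn} : Finset ℕ) + D') := by
        refine Finset.mem_union_right _ ?_
        rw [Finset.mem_add]
        exact ⟨nn, Finset.mem_singleton_self nn, 0, hD', rfl⟩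
      rw [h, Finset.mem_singleton] at this
      omega
end
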